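/- arXiv:2207.08153 — 8 statements merged into one kernel-verified Lean document; each statement's English description precedes it below -/
import Mathlib

section
/- If a family (q_{ij})_{i,j ∈ ℤ/Nℤ} in A satisfies the anyonic permutation relations, then for every t ∈ ℤ/Nℤ the rescaled family (ω^{t(j-i)} q_{ij})_{i,j ∈ ℤ/Nℤ} also satisfies the anyonic permutation relations. -/
noncomputable section

/-- `ω ^ m` for `m ∈ ℤ/Nℤ`; this is well defined (independent of the chosen
representative) as soon as `ω ^ N = 1`. -/
def wpow (N : ℕ) (ω : ℂ) (m : ZMod N) : ℂ := ω ^ m.val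

/-- `z ^ m` for `m ∈ ℤ/Nℤ`; well defined when `z ^ N = 1`. -/
def apow {A : Type*} [Monoid A] (N : ℕ) (z : A) (m : ZMod N) : A := z ^ m.val

/-- The anyonic permutation relations for a family `(q i j)` indexed by `ℤ/Nℤ × ℤ/Nℤ`. -/
def AnyonicPermRel (N : ℕ) [NeZero N] (ω : ℂ) {A : Type*} [Ring A] [StarRing A]
    [Algebra ℂ A] (q : ZMod N → ZMod N → A) : Prop :=
  (∀ i : ZMod N, q 0 i = if i = 0 then 1 else 0) ∧
  (∀ i : ZMod N, q i 0 = if i = 0 then 1 else 0) ∧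
  (∀ i j : ZMod N, star (q i j) = wpow N ω (-(i * (i - j))) • q (-i) (-j)) ∧
  (∀ i j k : ZMod N, q k (i + j) =
    ∑ l : ZMod N, wpow N ω (-(l * (i - k + l))) • (q (k - l) i * q l j)) ∧
  (∀ i j k : ZMod N, q (i + j) k =
    ∑ l : ZMod N, wpow N ω (-(i * (l - j))) • (q j l * q i (k - l)))

/-- The untwisted relations for a family `(a i j)` indexed by `ℤ/Nℤ × ℤ/Nℤ`. -/
def UntwistedRel (N : ℕ) [NeZero N] {A : Type*} [Ring A] [StarRing A]
    (a : ZMod N → ZMod N → A) : Prop :=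
  (∀ i : ZMod N, a i 0 = if i = 0 then 1 else 0) ∧
  (∀ i j : ZMod N, star (a i j) = a (-i) (-j)) ∧
  (∀ i j k : ZMod N, ∑ l : ZMod N, a (k - l) i * a l j = a k (i + j)) ∧
  (∀ i j k : ZMod N, ∑ l : ZMod N, a j l * a i (k - l) = a (i + j) k)

/-- A matrix `(m i j)` over a unital `*`-algebra is unitary. -/
def IsUnitaryMatrix (N : ℕ) [NeZero N] {A : Type*} [Ring A] [StarRing A]
    (m : ZMod N → ZMod N → A) : Prop :=
  (∀ i j : ZMod N, ∑ k : ZMod N, star (m k i) * m k j = if i = j then 1 else 0) ∧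
  (∀ i j : ZMod N, ∑ k : ZMod N, m i k * star (m j k) = if i = j then 1 else 0)

/-- The twisted conjugate matrix `ū_R` with entries `ω^{-i(j-i)} u_{ij}*`. -/
def conjR (N : ℕ) (ω : ℂ) {A : Type*} [Ring A] [StarRing A] [Algebra ℂ A]
    (u : ZMod N → ZMod N → A) : ZMod N → ZMod N → A :=
  fun i j => wpow N ω (-(i * (j - i))) • star (u i j)

/-- A magic unitary: entries are projections and all rows and columns sum to `1`. -/
def IsMagicUnitary (N : ℕ) [NeZero N] {A : Type*} [Ring A] [StarRing A]
    (u : ZMod N → ZMod N → A) : Prop :=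
  (∀ i j : ZMod N, u i j * u i j = u i j) ∧
  (∀ i j : ZMod N, star (u i j) = u i j) ∧
  (∀ j : ZMod N, ∑ i : ZMod N, u i j = 1) ∧
  (∀ i : ZMod N, ∑ j : ZMod N, u i j = 1)

/-!
The rescaled family is `D q D⁻¹` for `D = diag(ω^{-ti})`. Since `m ↦ ω^{tm}` is a character of
`ℤ/Nℤ` and in every relation the column-minus-row index differences add up to the same total on
both sides, the rescaling factors out of each relation.
-/

section wpow

variable {N : ℕ} {ω : ℂ}

@[simp]
lemma wpow_zero : wpow N ω 0 = 1 := by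
  simp [wpow]

lemma wpow_natCast (hω : ω ^ N = 1) (n : ℕ) : wpow N ω n = ω ^ n := by
  rw [wpow, ZMod.val_natCast]
  conv_rhs => rw [← Nat.mod_add_div n N, pow_add, pow_mul, hω, one_pow, mul_one]

lemma wpow_add [NeZero N] (hω : ω ^ N = 1) (a b : ZMod N) :
    wpow N ω (a + b) = wpow N ω a * wpow N ω b := by
  rw [← ZMod.natCast_zmod_val a, ← ZMod.natCast_zmod_val b, ← Nat.cast_add,
    wpow_natCast hω, wpow_natCast hω, wpow_natCast hω, pow_add]

lemma star_wpow [NeZero N] (hω : ω ^ N = 1) (m : ZMod N) : star (wpow N ω m) = wpow N ω (-m) := by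
  have hnorm : ‖wpow N ω m‖ = 1 := by
    rw [wpow, norm_pow, Complex.norm_eq_one_of_pow_eq_one hω (NeZero.ne N), one_pow]
  rw [Complex.star_def, ← Complex.inv_eq_conj hnorm]
  exact (eq_inv_of_mul_eq_one_right (by rw [← wpow_add hω, add_neg_cancel, wpow_zero])).symm

end wpow

theorem AnyonicPermRel.twist {N : ℕ} [NeZero N] {ω : ℂ} (hω : ω ^ N = 1) {A : Type*} [Ring A]
    [StarRing A] [Algebra ℂ A] [StarModule ℂ A] {q : ZMod N → ZMod N → A}
    (hq : AnyonicPermRel N ω q) (t : ZMod N) :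
    AnyonicPermRel N ω (fun i j => wpow N ω (t * (j - i)) • q i j) := by
  obtain ⟨hrow, hcol, hstar, hsplit_right, hsplit_left⟩ := hq
  refine ⟨fun i => ?_, fun i => ?_, fun i j => ?_, fun i j k => ?_, fun i j k => ?_⟩ <;>
    beta_reduce
  · rw [hrow i]
    split_ifs with hi <;> simp [hi]
  · rw [hcol i]
    split_ifs with hi <;> simp [hi]
  · rw [star_smul, hstar, star_wpow hω, smul_smul, smul_smul, ← wpow_add hω, ← wpow_add hω]
    congr 2
    ring
  · rw [hsplit_right i j k, Finset.smul_sum]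
    refine Finset.sum_congr rfl fun l _ => ?_
    simp only [smul_mul_smul_comm, smul_smul, ← wpow_add hω]
    congr 2
    ring
  · rw [hsplit_left i j k, Finset.smul_sum]
    refine Finset.sum_congr rfl fun l _ => ?_
    simp only [smul_mul_smul_comm, smul_smul, ← wpow_add hω]
    congr 2
    ring

theorem stmt_1_general (N : ℕ) [NeZero N] (ω : ℂ) (hω : IsPrimitiveRoot ω N)
    {A : Type*} [NormedRing A] [StarRing A]
    [NormedAlgebra ℂ A] [StarModule ℂ A]
    (q : ZMod N → ZMod N → A) (hq : AnyonicPermRel N ω q) (t : ZMod N) :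
    AnyonicPermRel N ω (fun i j => wpow N ω (t * (j - i)) • q i j) :=
  hq.twist hω.pow_eq_one t

theorem stmt_1 (N : ℕ) [NeZero N] (hN : 2 ≤ N) (ω : ℂ) (hω : IsPrimitiveRoot ω N)
    {A : Type*} [NormedRing A] [StarRing A] [CStarRing A]
    [NormedAlgebra ℂ A] [CompleteSpace A] [StarModule ℂ A]
    (q : ZMod N → ZMod N → A) (hq : AnyonicPermRel N ω q) (t : ZMod N) :
    AnyonicPermRel N ω (fun i j => wpow N ω (t * (j - i)) • q i j) :=
  stmt_1_general N ω hω q hq t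
end
end

section
/- Let (a_{ij}) and (b_{ij}) be two families in A, each satisfying the anyonic permutation relations, and suppose they graded-commute: a_{ij} b_{kl} = ω^{(j-i)(l-k)} b_{kl} a_{ij} for all i,j,k,l ∈ ℤ/Nℤ. Then the family Q_{ij} := ∑_{k ∈ ℤ/Nℤ} a_{ik} b_{kj} also satisfies the anyonic permutation relations. -/
noncomputable section

theorem stmt_5 (N : ℕ) [NeZero N] (hN : 2 ≤ N) (ω : ℂ) (hω : IsPrimitiveRoot ω N)
    {A : Type*} [NormedRing A] [StarRing A] [CStarRing A]
    [NormedAlgebra ℂ A] [CompleteSpace A] [StarModule ℂ A]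
    (a b : ZMod N → ZMod N → A)
    (ha : AnyonicPermRel N ω a) (hb : AnyonicPermRel N ω b)
    (hcomm : ∀ i j k l : ZMod N,
      a i j * b k l = wpow N ω ((j - i) * (l - k)) • (b k l * a i j)) :
    AnyonicPermRel N ω (fun i j => ∑ k : ZMod N, a i k * b k j) := by
  obtain ⟨ha1, ha2, ha3, ha4, ha5⟩ := ha
  obtain ⟨hb1, hb2, hb3, hb4, hb5⟩ := hb
  have hωN : ω ^ N = 1 := hω.pow_eq_one
  have wadd : ∀ m n : ZMod N, wpow N ω (m + n) = wpow N ω m * wpow N ω n := by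
    intro m n
    have hmod : ∀ x : ℕ, ω ^ (x % N) = ω ^ x := by
      intro x
      conv_rhs => rw [← Nat.div_add_mod x N]
      rw [pow_add, pow_mul, hωN, one_pow, one_mul]
    simp only [wpow, ZMod.val_add, hmod, pow_add]
  have wzero : wpow N ω 0 = 1 := by simp [wpow]
  have wcongr : ∀ (e e' : ZMod N) (x y : A), e = e' → x = y →
      wpow N ω e • x = wpow N ω e' • y := by
    rintro e e' x y rfl rfl; rfl
  have hcomm' : ∀ i j k l : ZMod N,
      b k l * a i j = wpow N ω (-((j - i) * (l - k))) • (a i j * b k l) := by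
    intro i j k l
    rw [hcomm i j k l, smul_smul, ← wadd, neg_add_cancel, wzero, one_smul]
  refine ⟨?_, ?_, ?_, ?_, ?_⟩
  · intro i
    show ∑ k : ZMod N, a 0 k * b k i = _
    simp [ha1, ite_mul, hb1]
  · intro i
    show ∑ k : ZMod N, a i k * b k 0 = _
    simp [hb2, mul_ite, ha2]
  · intro i j
    show star (∑ k : ZMod N, a i k * b k j)
        = wpow N ω (-(i * (i - j))) • ∑ k : ZMod N, a (-i) k * b k (-j)
    rw [star_sum, Finset.smul_sum]
    refine Fintype.sum_equiv (Equiv.neg (ZMod N)) _ _ (fun k => ?_)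
    simp only [Equiv.neg_apply]
    rw [star_mul, ha3, hb3, smul_mul_smul_comm, hcomm' (-i) (-k) (-k) (-j),
      smul_smul, ← wadd, ← wadd]
    exact wcongr _ _ _ _ (by ring) rfl
  · intro i j k
    show ∑ m : ZMod N, a k m * b m (i + j)
        = ∑ l : ZMod N, wpow N ω (-(l * (i - k + l))) •
            ((∑ m : ZMod N, a (k - l) m * b m i) * ∑ n : ZMod N, a l n * b n j)
    have key : ∀ m n : ZMod N,
        ∑ l : ZMod N, wpow N ω (-(l * (i - k + l))) •
            ((a (k - l) m * b m i) * (a l n * b n j))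
        = wpow N ω (-(n * (i - m))) • (a k (m + n) * (b m i * b n j)) := by
      intro m n
      rw [ha4 m n k, Finset.sum_mul, Finset.smul_sum]
      refine Finset.sum_congr rfl (fun l _ => ?_)
      rw [mul_assoc, ← mul_assoc (b m i), hcomm' l n m i, smul_mul_assoc,
        mul_smul_comm, smul_smul, ← wadd, smul_mul_assoc, smul_smul, ← wadd]
      exact wcongr _ _ _ _ (by ring) (by noncomm_ring)
    calc ∑ m : ZMod N, a k m * b m (i + j)
        = ∑ m : ZMod N, ∑ n : ZMod N, wpow N ω (-(n * (i - m + n))) •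
            (a k m * (b (m - n) i * b n j)) := by
          refine Finset.sum_congr rfl (fun m _ => ?_)
          rw [hb4 i j m, Finset.mul_sum]
          exact Finset.sum_congr rfl (fun n _ => (mul_smul_comm _ _ _))
      _ = ∑ n : ZMod N, ∑ m : ZMod N, wpow N ω (-(n * (i - m + n))) •
            (a k m * (b (m - n) i * b n j)) := Finset.sum_comm
      _ = ∑ n : ZMod N, ∑ m : ZMod N, wpow N ω (-(n * (i - m))) •
            (a k (m + n) * (b m i * b n j)) := by
          refine Finset.sum_congr rfl (fun n _ => ?_)
          refine Fintype.sum_equiv (Equiv.subRight n) _ _ (fun m => ?_)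
          simp only [Equiv.subRight_apply, sub_add_cancel]
          exact wcongr _ _ _ _ (by ring) rfl
      _ = ∑ m : ZMod N, ∑ n : ZMod N, wpow N ω (-(n * (i - m))) •
            (a k (m + n) * (b m i * b n j)) := Finset.sum_comm
      _ = ∑ m : ZMod N, ∑ n : ZMod N, ∑ l : ZMod N,
            wpow N ω (-(l * (i - k + l))) •
              ((a (k - l) m * b m i) * (a l n * b n j)) :=
          Finset.sum_congr rfl (fun m _ =>
            Finset.sum_congr rfl (fun n _ => (key m n).symm))
      _ = ∑ m : ZMod N, ∑ l : ZMod N, ∑ n : ZMod N,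
            wpow N ω (-(l * (i - k + l))) •
              ((a (k - l) m * b m i) * (a l n * b n j)) :=
          Finset.sum_congr rfl (fun m _ => Finset.sum_comm)
      _ = ∑ l : ZMod N, ∑ m : ZMod N, ∑ n : ZMod N,
            wpow N ω (-(l * (i - k + l))) •
              ((a (k - l) m * b m i) * (a l n * b n j)) := Finset.sum_comm
      _ = ∑ l : ZMod N, wpow N ω (-(l * (i - k + l))) •
            ((∑ m : ZMod N, a (k - l) m * b m i) * ∑ n : ZMod N, a l n * b n j) := by
          refine Finset.sum_congr rfl (fun l _ => ?_)
          rw [Finset.sum_mul_sum]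
          simp only [Finset.smul_sum]
  · intro i j k
    show ∑ m : ZMod N, a (i + j) m * b m k
        = ∑ l : ZMod N, wpow N ω (-(i * (l - j))) •
            ((∑ m : ZMod N, a j m * b m l) * ∑ n : ZMod N, a i n * b n (k - l))
    have key : ∀ m n : ZMod N,
        ∑ l : ZMod N, wpow N ω (-(i * (l - j))) •
            ((a j m * b m l) * (a i n * b n (k - l)))
        = wpow N ω (-(i * (m - j))) • (a j m * a i n * b (n + m) k) := by
      intro m n
      rw [hb5 n m k, Finset.mul_sum, Finset.smul_sum]
      refine Finset.sum_congr rfl (fun l _ => ?_)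
      rw [mul_assoc, ← mul_assoc (b m l), hcomm' i n m l, smul_mul_assoc,
        mul_smul_comm, smul_smul, ← wadd, mul_smul_comm, smul_smul, ← wadd]
      exact wcongr _ _ _ _ (by ring) (by noncomm_ring)
    calc ∑ m : ZMod N, a (i + j) m * b m k
        = ∑ m : ZMod N, ∑ n : ZMod N, wpow N ω (-(i * (n - j))) •
            (a j n * a i (m - n) * b m k) := by
          refine Finset.sum_congr rfl (fun m _ => ?_)
          rw [ha5 i j m, Finset.sum_mul]
          exact Finset.sum_congr rfl (fun n _ => (smul_mul_assoc _ _ _))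
      _ = ∑ n : ZMod N, ∑ m : ZMod N, wpow N ω (-(i * (n - j))) •
            (a j n * a i (m - n) * b m k) := Finset.sum_comm
      _ = ∑ n : ZMod N, ∑ m : ZMod N, wpow N ω (-(i * (n - j))) •
            (a j n * a i m * b (m + n) k) := by
          refine Finset.sum_congr rfl (fun n _ => ?_)
          refine Fintype.sum_equiv (Equiv.subRight n) _ _ (fun m => ?_)
          simp only [Equiv.subRight_apply, sub_add_cancel]
      _ = ∑ m : ZMod N, ∑ n : ZMod N, wpow N ω (-(i * (m - j))) •
            (a j m * a i n * b (n + m) k) := rfl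
      _ = ∑ m : ZMod N, ∑ n : ZMod N, ∑ l : ZMod N,
            wpow N ω (-(i * (l - j))) •
              ((a j m * b m l) * (a i n * b n (k - l))) :=
          Finset.sum_congr rfl (fun m _ =>
            Finset.sum_congr rfl (fun n _ => (key m n).symm))
      _ = ∑ m : ZMod N, ∑ l : ZMod N, ∑ n : ZMod N,
            wpow N ω (-(i * (l - j))) •
              ((a j m * b m l) * (a i n * b n (k - l))) :=
          Finset.sum_congr rfl (fun m _ => Finset.sum_comm)
      _ = ∑ l : ZMod N, ∑ m : ZMod N, ∑ n : ZMod N,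
            wpow N ω (-(i * (l - j))) •
              ((a j m * b m l) * (a i n * b n (k - l))) := Finset.sum_comm
      _ = ∑ l : ZMod N, wpow N ω (-(i * (l - j))) •
            ((∑ m : ZMod N, a j m * b m l) * ∑ n : ZMod N, a i n * b n (k - l)) := by
          refine Finset.sum_congr rfl (fun l _ => ?_)
          rw [Finset.sum_mul_sum]
          simp only [Finset.smul_sum]
end
end

section
/- Let u = (u_{ij})_{i,j ∈ ℤ/Nℤ} be a matrix over A such that both u and ū_R are unitary. Then for every t ∈ ℤ/Nℤ, the matrix u^{(t)} with entries u^{(t)}_{ij} = ω^{t(j-i)} u_{ij} is unitary and its twisted conjugate (u^{(t)})‾_R, with entries ω^{-i(j-i)} (u^{(t)}_{ij})*, is unitary. -/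
noncomputable section

section myaux

lemma my_wpow_add {N : ℕ} [NeZero N] {ω : ℂ} (hω : IsPrimitiveRoot ω N) (a b : ZMod N) :
    wpow N ω a * wpow N ω b = wpow N ω (a + b) := by
  unfold wpow
  rw [← pow_add, ZMod.val_add]
  conv_lhs => rw [← Nat.div_add_mod (a.val + b.val) N]
  rw [pow_add, pow_mul, hω.pow_eq_one, one_pow, one_mul]

lemma my_wpow_zero (N : ℕ) [NeZero N] (ω : ℂ) : wpow N ω 0 = 1 := by
  simp [wpow]

lemma my_conj_wpow {N : ℕ} [NeZero N] {ω : ℂ} (hω : IsPrimitiveRoot ω N) (a : ZMod N) :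
    (starRingEnd ℂ) (wpow N ω a) = wpow N ω (-a) := by
  have h1 : wpow N ω a * wpow N ω (-a) = 1 := by
    rw [my_wpow_add hω, add_neg_cancel, my_wpow_zero]
  have habs : ‖wpow N ω a‖ = 1 := by
    have := Complex.norm_eq_one_of_pow_eq_one hω.pow_eq_one (NeZero.ne N)
    simp [wpow, norm_pow, this]
  rw [← Complex.inv_eq_conj habs]
  exact inv_eq_of_mul_eq_one_right h1

lemma my_twist_unitary {N : ℕ} [NeZero N] {ω : ℂ} (hω : IsPrimitiveRoot ω N)
    {A : Type*} [Ring A] [StarRing A] [Algebra ℂ A] [StarModule ℂ A]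
    (m : ZMod N → ZMod N → A) (hm : IsUnitaryMatrix N m) (t : ZMod N) :
    IsUnitaryMatrix N (fun i j => wpow N ω (t * (j - i)) • m i j) := by
  obtain ⟨h1, h2⟩ := hm
  constructor
  · intro i j
    have key : ∀ k : ZMod N,
        star (wpow N ω (t * (i - k)) • m k i) * (wpow N ω (t * (j - k)) • m k j)
          = wpow N ω (t * (j - i)) • (star (m k i) * m k j) := by
      intro k
      rw [star_smul, Complex.star_def, my_conj_wpow hω, smul_mul_smul_comm,
        my_wpow_add hω]
      congr 2
      ring
    simp only [key, ← Finset.smul_sum, h1 i j]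
    split_ifs with h
    · subst h; simp [my_wpow_zero]
    · simp
  · intro i j
    have key : ∀ k : ZMod N,
        (wpow N ω (t * (k - i)) • m i k) * star (wpow N ω (t * (k - j)) • m j k)
          = wpow N ω (t * (j - i)) • (m i k * star (m j k)) := by
      intro k
      rw [star_smul, Complex.star_def, my_conj_wpow hω, smul_mul_smul_comm,
        my_wpow_add hω]
      congr 2
      ring
    simp only [key, ← Finset.smul_sum, h2 i j]
    split_ifs with h
    · subst h; simp [my_wpow_zero]
    · simp

end myaux

theorem stmt_6 (N : ℕ) [NeZero N] (hN : 2 ≤ N) (ω : ℂ) (hω : IsPrimitiveRoot ω N)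
    {A : Type*} [NormedRing A] [StarRing A] [CStarRing A]
    [NormedAlgebra ℂ A] [CompleteSpace A] [StarModule ℂ A]
    (u : ZMod N → ZMod N → A)
    (hu : IsUnitaryMatrix N u) (hu' : IsUnitaryMatrix N (conjR N ω u)) (t : ZMod N) :
    IsUnitaryMatrix N (fun i j => wpow N ω (t * (j - i)) • u i j) ∧
    IsUnitaryMatrix N (conjR N ω (fun i j => wpow N ω (t * (j - i)) • u i j)) := by
  constructor
  · exact my_twist_unitary hω u hu t
  · have heq : conjR N ω (fun i j => wpow N ω (t * (j - i)) • u i j)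
        = fun i j => wpow N ω ((-t) * (j - i)) • conjR N ω u i j := by
      funext i j
      simp only [conjR, star_smul, Complex.star_def, my_conj_wpow hω, smul_smul,
        my_wpow_add hω]
      congr 2
      ring
    rw [heq]
    exact my_twist_unitary hω _ hu' (-t)
end
end

section
/- Let z ∈ A be a unitary with z^N = 1, and let u = (u_{ij}) be a matrix over A such that u and ū_R are unitary and z u_{ij} = ω^{j-i} u_{ij} z for all i,j ∈ ℤ/Nℤ. Then the matrix t' with entries t'_{ij} := z^i u_{ij} is unitary over A: ∑_{k} (t'_{ki})* t'_{kj} = δ_{ij}·1 and ∑_{k} t'_{ik} (t'_{jk})* = δ_{ij}·1 for all i,j. -/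
noncomputable section

set_option linter.unusedSectionVars false

section Aux

variable {A : Type*} [Ring A] [Algebra ℂ A]

lemma aux_mul_pow_one (a b : A) (h : a * b = 1) : ∀ n : ℕ, a ^ n * b ^ n = 1 := by
  intro n
  induction n with
  | zero => simp
  | succ n ih =>
    rw [pow_succ a, pow_succ' b, mul_assoc, ← mul_assoc a, h, one_mul, ih]

lemma aux_comm_pow (z a : A) (c : ℂ) (h : z * a = c • (a * z)) (n : ℕ) :
    z ^ n * a = c ^ n • (a * z ^ n) := by
  induction n with
  | zero => simp
  | succ n ih =>
    rw [pow_succ' z, mul_assoc, ih, mul_smul_comm, ← mul_assoc, h, smul_mul_assoc,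
      smul_smul, ← pow_succ, mul_assoc, ← pow_succ' z]

lemma aux_four (a b p q : A) (c d : ℂ) (h1 : p * a = c • (a * p)) (h2 : p * b = d • (b * p)) :
    (p * a) * (b * q) = (c * d) • (a * b * (p * q)) := by
  rw [h1, smul_mul_assoc, mul_smul]
  congr 1
  rw [mul_assoc a p, ← mul_assoc p b, h2, smul_mul_assoc, mul_smul_comm]
  congr 1
  simp only [mul_assoc]

end Aux

lemma aux_pow_mod {ω : ℂ} {N : ℕ} (h : ω ^ N = 1) (x : ℕ) : ω ^ (x % N) = ω ^ x := by
  conv_rhs => rw [← Nat.div_add_mod x N]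
  rw [pow_add, pow_mul, h, one_pow, one_mul]

lemma aux_wpow_add (N : ℕ) [NeZero N] (ω : ℂ) (h : ω ^ N = 1) (a b : ZMod N) :
    wpow N ω a * wpow N ω b = wpow N ω (a + b) := by
  unfold wpow
  rw [← pow_add, ZMod.val_add, aux_pow_mod h]

lemma aux_wpow_star (N : ℕ) (ω : ℂ) (h : ‖ω‖ = 1) (m : ZMod N) :
    star (wpow N ω m) = (wpow N ω m)⁻¹ := by
  unfold wpow
  rw [Complex.star_def, map_pow, ← Complex.inv_eq_conj (by simpa using h), inv_pow]

lemma aux_wpow_ne_zero (N : ℕ) (ω : ℂ) (h : ω ≠ 0) (m : ZMod N) : wpow N ω m ≠ 0 :=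
  pow_ne_zero _ h


theorem stmt_10 (N : ℕ) [NeZero N] (hN : 2 ≤ N) (ω : ℂ) (hω : IsPrimitiveRoot ω N)
    {A : Type*} [NormedRing A] [StarRing A] [CStarRing A]
    [NormedAlgebra ℂ A] [CompleteSpace A] [StarModule ℂ A]
    (z : A) (hz : star z * z = 1 ∧ z * star z = 1) (hzN : z ^ N = 1)
    (u : ZMod N → ZMod N → A)
    (hu : IsUnitaryMatrix N u) (hu' : IsUnitaryMatrix N (conjR N ω u))
    (hcomm : ∀ i j : ZMod N, z * u i j = wpow N ω (j - i) • (u i j * z)) :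
    IsUnitaryMatrix N (fun i j => apow N z i * u i j) := by
  have hωN : ω ^ N = 1 := hω.pow_eq_one
  have hωne : ω ≠ 0 := fun h => by simp [h, zero_pow (NeZero.ne N)] at hωN
  have hωnorm : ‖ω‖ = 1 := Complex.norm_eq_one_of_pow_eq_one hωN (NeZero.ne N)
  have hz1 : ∀ n : ℕ, (star z) ^ n * z ^ n = 1 := aux_mul_pow_one _ _ hz.1
  have hz2 : ∀ n : ℕ, z ^ n * (star z) ^ n = 1 := aux_mul_pow_one _ _ hz.2
  have hcomm' : ∀ i j : ZMod N, z * star (u i j) = (wpow N ω (j - i))⁻¹ • (star (u i j) * z) := by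
    intro i j
    have hs : star (u i j) * star z = (wpow N ω (j - i))⁻¹ • (star z * star (u i j)) := by
      have h0 := congrArg star (hcomm i j)
      rw [star_mul, star_smul, star_mul, aux_wpow_star N ω hωnorm] at h0
      exact h0
    calc z * star (u i j) = z * star (u i j) * (star z * z) := by rw [hz.1, mul_one]
      _ = z * (star (u i j) * star z) * z := by simp only [mul_assoc]
      _ = z * ((wpow N ω (j - i))⁻¹ • (star z * star (u i j))) * z := by rw [hs]
      _ = (wpow N ω (j - i))⁻¹ • (z * star z * (star (u i j) * z)) := by
          rw [mul_smul_comm, smul_mul_assoc]; congr 1; simp only [mul_assoc]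
      _ = (wpow N ω (j - i))⁻¹ • (star (u i j) * z) := by rw [hz.2, one_mul]
  constructor
  · intro i j
    have hterm : ∀ k : ZMod N,
        star (apow N z k * u k i) * (apow N z k * u k j) = star (u k i) * u k j := by
      intro k
      unfold apow
      rw [star_mul, star_pow, mul_assoc, ← mul_assoc ((star z) ^ (ZMod.val k)),
        hz1 (ZMod.val k), one_mul]
    simp only [hterm]
    exact hu.1 i j
  · intro i j
    have hterm : ∀ k : ZMod N,
        (apow N z i * u i k) * star (apow N z j * u j k) =
          (wpow N ω (j - i)) ^ (ZMod.val i) •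
            (u i k * star (u j k) * (z ^ ZMod.val i * (star z) ^ ZMod.val j)) := by
      intro k
      unfold apow
      rw [star_mul, star_pow]
      rw [aux_four (u i k) (star (u j k)) (z ^ ZMod.val i) ((star z) ^ ZMod.val j)
        ((wpow N ω (k - i)) ^ ZMod.val i) (((wpow N ω (k - j))⁻¹) ^ ZMod.val i)
        (aux_comm_pow z (u i k) _ (hcomm i k) (ZMod.val i))
        (aux_comm_pow z (star (u j k)) _ (hcomm' j k) (ZMod.val i))]
      congr 1
      rw [← mul_pow]
      congr 1
      rw [← div_eq_mul_inv, div_eq_iff (aux_wpow_ne_zero N ω hωne _),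
        aux_wpow_add N ω hωN]
      congr 1
      ring
    simp only [hterm]
    rw [← Finset.smul_sum, ← Finset.sum_mul, hu.2 i j]
    by_cases h : i = j
    · subst h
      have h1 : wpow N ω (0 : ZMod N) = 1 := by simp [wpow]
      rw [if_pos rfl, sub_self, h1, one_pow, one_smul, one_mul, hz2 (ZMod.val i)]
    · rw [if_neg h, zero_mul, smul_zero]
end
end

section
/- Let u = (u_{ij})_{i,j ∈ ℤ/Nℤ} be a matrix over A and define a := Ω^{-1} u Ω, i.e. a_{ij} = (1/N) ∑_{r,s ∈ ℤ/Nℤ} ω^{ir - sj} u_{rs}, where Ω_{ij} = (1/N) ω^{-ij} and Ω^{-1}_{ij} = ω^{ij}. Then u is a magic unitary if and only if the family (a_{ij}) satisfies the untwisted relations. -/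
noncomputable section

/-!
Up to the factor `1/N`, `a = Ω⁻¹ u Ω` is the two-dimensional discrete Fourier transform of `u`
for the primitive character `m ↦ ω ^ m` of `ℤ/Nℤ`. This transform is injective, so each
untwisted relation translates into a relation on `u`: (a) says that the rows of `u` sum to `1`,
(b) that its entries are self-adjoint, and, by the convolution theorem, (c) and (d) say that the
Fourier transform of each row, resp. column, of `u` is multiplicative, which happens exactly when
its entries are orthogonal idempotents. In a C*-algebra, projections `p_k` summing to `1` are
orthogonal, because `∑_{k ≠ j} (p_k p_j)* (p_k p_j) = p_j - p_j = 0`; and the column sums `q_s`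
of a matrix with orthogonal projections in each column are projections with `∑ q_s = N`, which
forces `q_s = 1`. Together these identify the four relations with the magic unitary axioms.
-/

open Finset AddChar

section CharTransform

variable {R : Type*} [CommRing R] [Fintype R] {ψ : AddChar R ℂ}
  {M : Type*} [AddCommGroup M] [Module ℂ M]

def charTransform (ψ : AddChar R ℂ) (f : R → M) (t : R) : M := ∑ r, ψ (t * r) • f r

lemma charTransform_apply_zero (f : R → M) : charTransform ψ f 0 = ∑ r, f r := by
  simp [charTransform]

lemma charTransform_const [DecidableEq R] (hψ : ψ.IsPrimitive) (x : M) (t : R) :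
    charTransform ψ (fun _ => x) t = (if t = 0 then (Fintype.card R : ℂ) else 0) • x := by
  simp_rw [charTransform, ← Finset.sum_smul, mul_comm t, sum_mulShift t hψ, Nat.cast_ite,
    Nat.cast_zero]

lemma charTransform_charTransform (hψ : ψ.IsPrimitive) (f : R → M) (t : R) :
    charTransform ψ (charTransform ψ f) t = (Fintype.card R : ℂ) • f (-t) := by
  classical
  have hphase : ∀ x r, ψ (t * x) * ψ (x * r) = ψ (x * (r + t)) := fun x r => by
    rw [← map_add_eq_mul]; ring_nf
  simp_rw [charTransform, Finset.smul_sum, smul_smul, hphase]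
  rw [Finset.sum_comm]
  simp only [← Finset.sum_smul, sum_mulShift _ hψ, add_eq_zero_iff_eq_neg, Nat.cast_ite,
    Nat.cast_zero, ite_smul, zero_smul, Finset.sum_ite_eq', Finset.mem_univ, if_true]

lemma charTransform_injective (hψ : ψ.IsPrimitive) :
    Function.Injective (charTransform ψ : (R → M) → R → M) := by
  intro f g h
  funext r
  have hcard : (Fintype.card R : ℂ) ≠ 0 := by simp
  simpa [charTransform_charTransform hψ, hcard] using congrFun (congrArg (charTransform ψ) h) (-r)

lemma inv_card_smul_charTransform_injective (hψ : ψ.IsPrimitive) :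
    Function.Injective fun (f : R → M) k => (Fintype.card R : ℂ)⁻¹ • charTransform ψ f k := by
  intro f g h
  have hcard : (Fintype.card R : ℂ)⁻¹ ≠ 0 := by simp
  exact charTransform_injective hψ (funext fun k => smul_right_injective M hcard (congrFun h k))

lemma star_charTransform [StarAddMonoid M] [StarModule ℂ M] (f : R → M) (t : R) :
    star (charTransform ψ f t) = charTransform ψ (fun r => star (f r)) (-t) := by
  simp [charTransform, star_sum, star_smul, neg_mul, map_neg_eq_conj]

lemma sum_charTransform_mul_charTransform (hψ : ψ.IsPrimitive) {A : Type*} [Ring A] [Algebra ℂ A]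
    (f g : R → A) (k : R) :
    ∑ l, charTransform ψ f (k - l) * charTransform ψ g l =
      (Fintype.card R : ℂ) • charTransform ψ (fun r => f r * g r) k := by
  classical
  have hphase : ∀ l r r', ψ ((k - l) * r) * ψ (l * r') = ψ (k * r) * ψ (l * (r' - r)) :=
    fun l r r' => by rw [← map_add_eq_mul, ← map_add_eq_mul]; ring_nf
  simp_rw [charTransform, Finset.sum_mul, Finset.mul_sum, smul_mul_smul_comm, hphase, mul_smul]
  rw [Finset.sum_comm, Finset.smul_sum]
  refine Finset.sum_congr rfl fun r _ => ?_
  rw [Finset.sum_comm]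
  simp only [← Finset.smul_sum, ← Finset.sum_smul, sum_mulShift _ hψ, sub_eq_zero, Nat.cast_ite,
    Nat.cast_zero, ite_smul, zero_smul, Finset.sum_ite_eq', Finset.mem_univ, if_true]
  rw [smul_comm]

def charTransform₂ (ψ : AddChar R ℂ) (F : R → R → M) (i j : R) : M :=
  charTransform ψ (fun r => charTransform ψ (F r) j) i

lemma charTransform₂_injective (hψ : ψ.IsPrimitive) :
    Function.Injective (charTransform₂ ψ : (R → R → M) → R → R → M) := by
  intro F G h
  funext r
  refine charTransform_injective hψ (funext fun j => ?_)
  exact congrFun (charTransform_injective hψ (funext fun i => congrFun (congrFun h i) j)) r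

lemma orthogonalIdempotents_iff_charTransform_mul (hψ : ψ.IsPrimitive)
    {A : Type*} [Ring A] [Algebra ℂ A] {p : R → A} :
    OrthogonalIdempotents p ↔
      ∀ i j, charTransform ψ p i * charTransform ψ p j = charTransform ψ p (i + j) := by
  classical
  have hmul : ∀ i j, charTransform ψ p i * charTransform ψ p j =
      charTransform₂ ψ (fun s s' => p s * p s') i j := fun i j => by
    simp only [charTransform₂, charTransform, Finset.sum_mul_sum, smul_mul_smul_comm,
      Finset.smul_sum, smul_smul]
  have hadd : ∀ i j, charTransform ψ p (i + j) =
      charTransform₂ ψ (fun s s' => if s = s' then p s else 0) i j := fun i j => by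
    simp [charTransform₂, charTransform, add_mul, map_add_eq_mul, mul_smul]
  calc OrthogonalIdempotents p
      ↔ (fun s s' => p s * p s') = fun s s' => if s = s' then p s else 0 := by
        simp only [OrthogonalIdempotents.iff_mul_eq, funext_iff]
    _ ↔ _ := (charTransform₂_injective hψ).eq_iff.symm
    _ ↔ _ := by simp only [funext_iff, hmul, hadd]

end CharTransform

section FourierConj

variable {R : Type*} [CommRing R] [Fintype R] {ψ : AddChar R ℂ}
  {A : Type*} [Ring A] [Algebra ℂ A]

/-- The matrix `Ω⁻¹ u Ω` of the paper, with `Ω⁻¹ i j = ψ (i * j)` and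
`Ω i j = ψ (-(i * j)) / #R`. -/
def fourierConj (ψ : AddChar R ℂ) (u : R → R → A) (i j : R) : A :=
  (Fintype.card R : ℂ)⁻¹ • ∑ r, ∑ s, ψ (i * r - s * j) • u r s

lemma fourierConj_eq_charTransform₂ (u : R → R → A) (i j : R) :
    fourierConj ψ u i j = (Fintype.card R : ℂ)⁻¹ • charTransform₂ ψ u i (-j) := by
  have hphase : ∀ r s, ψ (i * r) * ψ (-j * s) = ψ (i * r - s * j) := fun r s => by
    rw [← map_add_eq_mul]; ring_nf
  simp only [fourierConj, charTransform₂, charTransform, Finset.smul_sum, smul_smul, hphase]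

lemma fourierConj_eq_charTransform₂_transpose (u : R → R → A) (i j : R) :
    fourierConj ψ u i j =
      (Fintype.card R : ℂ)⁻¹ • charTransform₂ ψ (fun s r => u r s) (-j) i := by
  have hphase : ∀ r s, ψ (-j * s) * ψ (i * r) = ψ (i * r - s * j) := fun r s => by
    rw [← map_add_eq_mul]; ring_nf
  simp only [fourierConj, charTransform₂, charTransform, Finset.smul_sum, smul_smul, hphase]
  exact Finset.sum_comm

lemma fourierConj_apply_zero_right_iff [DecidableEq R] (hψ : ψ.IsPrimitive) (u : R → R → A) :
    (∀ i, fourierConj ψ u i 0 = if i = 0 then 1 else 0) ↔ ∀ r, ∑ s, u r s = 1 := by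
  have hlhs : ∀ i, fourierConj ψ u i 0 =
      (Fintype.card R : ℂ)⁻¹ • charTransform ψ (fun r => ∑ s, u r s) i := fun i => by
    rw [fourierConj_eq_charTransform₂, charTransform₂, neg_zero]
    simp only [charTransform_apply_zero]
  have hrhs : ∀ i, (if i = 0 then 1 else 0 : A) =
      (Fintype.card R : ℂ)⁻¹ • charTransform ψ (fun _ => 1) i := fun i => by
    rw [charTransform_const hψ]
    split_ifs <;> simp
  simp only [hlhs, hrhs, ← funext_iff, (inv_card_smul_charTransform_injective hψ).eq_iff]

lemma star_fourierConj_iff [StarRing A] [StarModule ℂ A] (hψ : ψ.IsPrimitive) (u : R → R → A) :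
    (∀ i j, star (fourierConj ψ u i j) = fourierConj ψ u (-i) (-j)) ↔
      ∀ r s, star (u r s) = u r s := by
  have hcard : (Fintype.card R : ℂ)⁻¹ ≠ 0 := by simp
  have hstar : ∀ i j, star (fourierConj ψ u i j) =
      (Fintype.card R : ℂ)⁻¹ • charTransform₂ ψ (fun r s => star (u r s)) (-i) j := by
    intro i j
    simp [fourierConj_eq_charTransform₂, charTransform₂, star_charTransform]
  have hneg : ∀ i j, fourierConj ψ u (-i) (-j) =
      (Fintype.card R : ℂ)⁻¹ • charTransform₂ ψ u (-i) j := by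
    intro i j
    rw [fourierConj_eq_charTransform₂, neg_neg]
  calc (∀ i j, star (fourierConj ψ u i j) = fourierConj ψ u (-i) (-j))
      ↔ ∀ i j, charTransform₂ ψ (fun r s => star (u r s)) i j = charTransform₂ ψ u i j := by
        simp only [hstar, hneg, smul_right_inj hcard]
        exact ⟨fun h i j => by simpa using h (-i) j, fun h i j => h (-i) j⟩
    _ ↔ (fun r s => star (u r s)) = u := by
        rw [← (charTransform₂_injective hψ).eq_iff]; simp only [funext_iff]
    _ ↔ _ := by simp only [funext_iff]

lemma sum_fourierConj_sub_mul_iff (hψ : ψ.IsPrimitive) (u : R → R → A) :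
    (∀ i j k, ∑ l, fourierConj ψ u (k - l) i * fourierConj ψ u l j = fourierConj ψ u k (i + j)) ↔
      ∀ r, OrthogonalIdempotents (u r) := by
  have hconv : ∀ i j k, ∑ l, fourierConj ψ u (k - l) i * fourierConj ψ u l j =
      (Fintype.card R : ℂ)⁻¹ • charTransform ψ
        (fun r => charTransform ψ (u r) (-i) * charTransform ψ (u r) (-j)) k := by
    intro i j k
    simp only [fourierConj_eq_charTransform₂, charTransform₂, smul_mul_smul_comm, ← Finset.smul_sum,
      sum_charTransform_mul_charTransform hψ, smul_smul]
    congr 1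
    field_simp
  have hadd : ∀ i j k, fourierConj ψ u k (i + j) =
      (Fintype.card R : ℂ)⁻¹ • charTransform ψ (fun r => charTransform ψ (u r) (-i + -j)) k := by
    intro i j k
    rw [fourierConj_eq_charTransform₂, charTransform₂, neg_add]
  calc _ ↔ ∀ i j r, charTransform ψ (u r) (-i) * charTransform ψ (u r) (-j) =
        charTransform ψ (u r) (-i + -j) := by
        simp only [hconv, hadd, ← funext_iff, (inv_card_smul_charTransform_injective hψ).eq_iff]
    _ ↔ ∀ r i j, charTransform ψ (u r) i * charTransform ψ (u r) j =
        charTransform ψ (u r) (i + j) :=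
        ⟨fun h r i j => by simpa using h (-i) (-j) r, fun h i j r => h r (-i) (-j)⟩
    _ ↔ _ := forall_congr' fun r => (orthogonalIdempotents_iff_charTransform_mul hψ).symm

lemma sum_fourierConj_mul_sub_iff (hψ : ψ.IsPrimitive) (u : R → R → A) :
    (∀ i j k, ∑ l, fourierConj ψ u j l * fourierConj ψ u i (k - l) = fourierConj ψ u (i + j) k) ↔
      ∀ s, OrthogonalIdempotents fun r => u r s := by
  have hconv : ∀ i j k, ∑ l, fourierConj ψ u j l * fourierConj ψ u i (k - l) =
      (Fintype.card R : ℂ)⁻¹ • charTransform ψ (fun s => charTransform ψ (fun r => u r s) j *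
        charTransform ψ (fun r => u r s) i) (-k) := by
    intro i j k
    have hshift : ∀ m, -(m + k) = -k - m ∧ -(k - (m + k)) = m := fun m => by constructor <;> ring
    rw [← Equiv.sum_comp (Equiv.addRight k)]
    simp only [Equiv.coe_addRight, fourierConj_eq_charTransform₂_transpose, charTransform₂,
      hshift, smul_mul_smul_comm, ← Finset.smul_sum, sum_charTransform_mul_charTransform hψ,
      smul_smul]
    congr 1
    field_simp
  have hadd : ∀ i j k, fourierConj ψ u (i + j) k =
      (Fintype.card R : ℂ)⁻¹ • charTransform ψ
        (fun s => charTransform ψ (fun r => u r s) (i + j)) (-k) := by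
    intro i j k
    rw [fourierConj_eq_charTransform₂_transpose, charTransform₂]
  calc _ ↔ ∀ i j s, charTransform ψ (fun r => u r s) j * charTransform ψ (fun r => u r s) i =
        charTransform ψ (fun r => u r s) (i + j) := by
        have hnegk : ∀ {F G : R → A}, (∀ k, (Fintype.card R : ℂ)⁻¹ • charTransform ψ F (-k) =
            (Fintype.card R : ℂ)⁻¹ • charTransform ψ G (-k)) ↔ F = G := fun {F G} =>
          ⟨fun h => inv_card_smul_charTransform_injective hψ <|
              funext fun k => by simpa using h (-k),
            fun h k => by rw [h]⟩
        simp only [hconv, hadd, hnegk, funext_iff]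
    _ ↔ ∀ s i j, charTransform ψ (fun r => u r s) i * charTransform ψ (fun r => u r s) j =
        charTransform ψ (fun r => u r s) (i + j) :=
        ⟨fun h s i j => by simpa [add_comm] using h j i s,
          fun h i j s => by simpa [add_comm] using h s j i⟩
    _ ↔ _ := forall_congr' fun s => (orthogonalIdempotents_iff_charTransform_mul hψ).symm

end FourierConj

section StarProjection

variable {A : Type*} [CStarAlgebra A] [PartialOrder A] [StarOrderedRing A]
  {ι : Type*} [Fintype ι]

lemma orthogonalIdempotents_of_isStarProjection_of_sum_eq_one [DecidableEq ι] {p : ι → A}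
    (hp : ∀ i, IsStarProjection (p i)) (hsum : ∑ i, p i = 1) : OrthogonalIdempotents p := by
  refine ⟨fun i => (hp i).isIdempotentElem, fun i j hij => ?_⟩
  have hsq : ∀ k, star (p k * p j) * (p k * p j) = p j * p k * p j := fun k => by
    rw [star_mul, (hp j).isSelfAdjoint.star_eq, (hp k).isSelfAdjoint.star_eq, mul_assoc,
      ← mul_assoc (p k), (hp k).isIdempotentElem.eq, mul_assoc]
  have hzero : ∑ k ∈ univ.erase j, star (p k * p j) * (p k * p j) = 0 := by
    simp only [hsq, Finset.sum_erase_eq_sub (mem_univ j), ← Finset.sum_mul, ← Finset.mul_sum,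
      hsum, mul_one, (hp j).isIdempotentElem.eq, sub_self]
  have hij' := (Finset.sum_eq_zero_iff_of_nonneg fun k _ => star_mul_self_nonneg _).mp hzero i
    (mem_erase.mpr ⟨hij, mem_univ i⟩)
  exact (CStarRing.star_mul_self_eq_zero_iff _).mp hij'

lemma eq_one_of_isStarProjection_of_sum_eq_card {p : ι → A} (hp : ∀ i, IsStarProjection (p i))
    (hsum : ∑ i, p i = Fintype.card ι) (i : ι) : p i = 1 := by
  have hzero : ∑ k, (1 - p k) = 0 := by simp [Finset.sum_sub_distrib, hsum]
  exact (sub_eq_zero.mp ((Finset.sum_eq_zero_iff_of_nonneg fun k _ =>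
    (hp k).one_sub_nonneg).mp hzero i (mem_univ i))).symm

end StarProjection

lemma isMagicUnitary_iff {A : Type*} [CStarAlgebra A] {N : ℕ} [NeZero N]
    (u : ZMod N → ZMod N → A) :
    IsMagicUnitary N u ↔ (∀ r, ∑ s, u r s = 1) ∧ (∀ r s, star (u r s) = u r s) ∧
      (∀ r, OrthogonalIdempotents (u r)) ∧ ∀ s, OrthogonalIdempotents fun r => u r s := by
  let := CStarAlgebra.spectralOrder A
  have := CStarAlgebra.spectralOrderedRing A
  constructor
  · rintro ⟨hidem, hstar, hcol, hrow⟩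
    have hproj : ∀ r s, IsStarProjection (u r s) := fun r s => ⟨hidem r s, hstar r s⟩
    exact ⟨hrow, hstar,
      fun r => orthogonalIdempotents_of_isStarProjection_of_sum_eq_one (hproj r) (hrow r),
      fun s => orthogonalIdempotents_of_isStarProjection_of_sum_eq_one (hproj · s) (hcol s)⟩
  · rintro ⟨hrow, hstar, hrowOrth, hcolOrth⟩
    refine ⟨fun r s => (hrowOrth r).idem s, hstar, fun s => ?_, hrow⟩
    refine eq_one_of_isStarProjection_of_sum_eq_card (p := fun s => ∑ r, u r s)
      (fun s => ⟨(hcolOrth s).isIdempotentElem_sum, ?_⟩) ?_ s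
    · simp only [IsSelfAdjoint, star_sum, hstar]
    · rw [Finset.sum_comm]
      simp [hrow]

theorem stmt_11_general (N : ℕ) [NeZero N] (ω : ℂ) (hω : IsPrimitiveRoot ω N)
    {A : Type*} [NormedRing A] [StarRing A] [CStarRing A]
    [NormedAlgebra ℂ A] [CompleteSpace A] [StarModule ℂ A]
    (u a : ZMod N → ZMod N → A)
    (ha : ∀ i j : ZMod N,
      a i j = (N : ℂ)⁻¹ • ∑ r : ZMod N, ∑ s : ZMod N, wpow N ω (i * r - s * j) • u r s) :
    IsMagicUnitary N u ↔ UntwistedRel N a := by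
  let : CStarAlgebra A := {}
  have hψ := zmodChar_primitive_of_primitive_root N hω
  obtain rfl : a = fourierConj (zmodChar N hω.pow_eq_one) u := by
    funext i j
    rw [ha, fourierConj, ZMod.card]
    rfl -- `zmodChar N _ m` is `ω ^ m.val`, which is `wpow N ω m`
  rw [isMagicUnitary_iff, UntwistedRel, fourierConj_apply_zero_right_iff hψ,
    star_fourierConj_iff hψ, sum_fourierConj_sub_mul_iff hψ, sum_fourierConj_mul_sub_iff hψ]

theorem stmt_11 (N : ℕ) [NeZero N] (hN : 2 ≤ N) (ω : ℂ) (hω : IsPrimitiveRoot ω N)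
    {A : Type*} [NormedRing A] [StarRing A] [CStarRing A]
    [NormedAlgebra ℂ A] [CompleteSpace A] [StarModule ℂ A]
    (u a : ZMod N → ZMod N → A)
    (ha : ∀ i j : ZMod N,
      a i j = (N : ℂ)⁻¹ • ∑ r : ZMod N, ∑ s : ZMod N, wpow N ω (i * r - s * j) • u r s) :
    IsMagicUnitary N u ↔ UntwistedRel N a :=
  stmt_11_general N ω hω u a ha
end
end

section
/- Let (w_{ij})_{i,j ∈ ℤ/Nℤ} be a family in A satisfying the untwisted relations, and let v ∈ A be a unitary with v^N = 1 such that v w_{ij} = ω^{j-i} w_{ij} v for all i,j ∈ ℤ/Nℤ. Then the family q_{ij} := v^{-i} w_{ij} satisfies the anyonic permutation relations. -/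
/-!
Moving the power of `v` in `q_{k-l,i} q_{lj} = v^{-(k-l)} w_{k-l,i} v^{-l} w_{lj}` to the left past
`w_{k-l,i}` costs the phase `ω^{l(i-k+l)}`, since `v^m w_{ij} = ω^{m(j-i)} w_{ij} v^m`; this is
exactly the phase in the anyonic relations, which thus reduce to the untwisted ones. The one
relation that is not formal is `q_{0i} = w_{0i} = δ_{i0}`: the untwisted relations give
`∑_l w_{0l} w_{0l}^* = w_{00} = 1`, and positivity in a C⋆-algebra forces `w_{0l} = 0` for `l ≠ 0`.
-/

noncomputable section

section ZModPow

variable {M : Type*} [Monoid M] {N : ℕ} {x : M}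

theorem wpow_eq_apow (ω : ℂ) (m : ZMod N) : wpow N ω m = apow N ω m := rfl

theorem apow_zero (x : M) : apow N x 0 = 1 := by
  simp [apow]

theorem apow_add [NeZero N] (hx : x ^ N = 1) (m n : ZMod N) :
    apow N x (m + n) = apow N x m * apow N x n := by
  rw [apow, ZMod.val_add, ← pow_eq_pow_mod _ hx, pow_add, apow, apow]

theorem apow_mul (hx : x ^ N = 1) (m n : ZMod N) : apow N x (m * n) = apow N x n ^ m.val := by
  rw [apow, ZMod.val_mul, ← pow_eq_pow_mod _ hx, apow, ← pow_mul, mul_comm]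

theorem apow_neg_mul_apow [NeZero N] (hx : x ^ N = 1) (m : ZMod N) :
    apow N x (-m) * apow N x m = 1 := by
  rw [← apow_add hx, neg_add_cancel, apow_zero]

theorem star_apow [NeZero N] [StarMul M] (hx : x ∈ unitary M) (hxN : x ^ N = 1) (m : ZMod N) :
    star (apow N x m) = apow N x (-m) := by
  have hunit : star (apow N x m) * apow N x m = 1 :=
    Unitary.star_mul_self_of_mem (pow_mem hx _)
  calc star (apow N x m)
      = star (apow N x m) * (apow N x m * apow N x (-m)) := by
        rw [← apow_add hxN, add_neg_cancel, apow_zero, mul_one]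
    _ = apow N x (-m) := by rw [← mul_assoc, hunit, one_mul]

end ZModPow

theorem pow_mul_eq_smul_mul_pow {R A : Type*} [Monoid R] [Monoid A] [MulAction R A]
    [IsScalarTower R A A] [SMulCommClass R A A] {v x : A} {c : R} (h : v * x = c • (x * v))
    (n : ℕ) : v ^ n * x = c ^ n • (x * v ^ n) := by
  induction n with
  | zero => simp
  | succ n ih =>
    rw [pow_succ', mul_assoc, ih, mul_smul_comm, ← mul_assoc, h, smul_mul_assoc, smul_smul,
      mul_assoc, ← pow_succ, ← pow_succ']

section Twist

variable {N : ℕ} [NeZero N] {ω : ℂ} {A : Type*} [Ring A] [Algebra ℂ A] {v x : A} {d : ZMod N}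

theorem wpow_neg_mul_wpow (hω : ω ^ N = 1) (m : ZMod N) : wpow N ω (-m) * wpow N ω m = 1 :=
  apow_neg_mul_apow hω m

omit [NeZero N] in
theorem apow_mul_eq_smul_mul_apow (hω : ω ^ N = 1) (h : v * x = wpow N ω d • (x * v))
    (m : ZMod N) : apow N v m * x = wpow N ω (m * d) • (x * apow N v m) := by
  rw [wpow_eq_apow, apow_mul hω]
  exact pow_mul_eq_smul_mul_pow h m.val

theorem mul_apow_eq_smul_apow_mul (hω : ω ^ N = 1) (h : v * x = wpow N ω d • (x * v))
    (m : ZMod N) : x * apow N v m = wpow N ω (-(m * d)) • (apow N v m * x) := by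
  rw [apow_mul_eq_smul_mul_apow hω h, smul_smul, wpow_neg_mul_wpow hω, one_smul]

theorem apow_neg_mul_mul_apow_neg_mul (hω : ω ^ N = 1) (hvN : v ^ N = 1)
    (h : v * x = wpow N ω d • (x * v)) (a c : ZMod N) (y : A) :
    apow N v (-a) * x * (apow N v (-c) * y) =
      wpow N ω (c * d) • (apow N v (-(a + c)) * (x * y)) := by
  rw [mul_assoc, ← mul_assoc x, mul_apow_eq_smul_apow_mul hω h, neg_mul, neg_neg,
    smul_mul_assoc, mul_smul_comm, ← mul_assoc, ← mul_assoc, ← apow_add hvN, neg_add, mul_assoc]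

end Twist

section AnyonicTwist

variable {N : ℕ} [NeZero N] {ω : ℂ} {A : Type*} [Ring A] [StarRing A] [Algebra ℂ A] {v : A}
  {w : ZMod N → ZMod N → A}

theorem UntwistedRel.anyonicPermRel_apow_neg_mul (hw : UntwistedRel N w)
    (hw0 : ∀ i, w 0 i = if i = 0 then 1 else 0) (hω : ω ^ N = 1) (hv : v ∈ unitary A)
    (hvN : v ^ N = 1) (hcomm : ∀ i j : ZMod N, v * w i j = wpow N ω (j - i) • (w i j * v)) :
    AnyonicPermRel N ω (fun i j => apow N v (-i) * w i j) := by
  obtain ⟨hw1, hw2, hw3, hw4⟩ := hw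
  refine ⟨fun i => ?_, fun i => ?_, fun i j => ?_, fun i j k => ?_, fun i j k => ?_⟩ <;>
    dsimp only
  · rw [neg_zero, apow_zero, one_mul, hw0]
  · rw [hw1]
    split_ifs with hi
    · rw [hi, neg_zero, apow_zero, one_mul]
    · rw [mul_zero]
  · rw [star_mul, hw2, star_apow hv hvN, neg_neg, mul_apow_eq_smul_apow_mul hω (hcomm _ _),
      show -(i * (-j - -i)) = -(i * (i - j)) by ring]
  · rw [← hw3, Finset.mul_sum]
    refine Finset.sum_congr rfl fun l _ => ?_
    rw [apow_neg_mul_mul_apow_neg_mul hω hvN (hcomm _ _), smul_smul,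
      show i - k + l = i - (k - l) by ring, wpow_neg_mul_wpow hω, one_smul, sub_add_cancel]
  · rw [← hw4, Finset.mul_sum]
    refine Finset.sum_congr rfl fun l _ => ?_
    rw [apow_neg_mul_mul_apow_neg_mul hω hvN (hcomm _ _), smul_smul, wpow_neg_mul_wpow hω,
      one_smul, add_comm]

end AnyonicTwist

theorem eq_zero_of_sum_mul_star_self_eq_zero {ι E : Type*} [NonUnitalNormedRing E] [StarRing E]
    [CStarRing E] [PartialOrder E] [StarOrderedRing E] {s : Finset ι} {x : ι → E}
    (h : ∑ i ∈ s, x i * star (x i) = 0) {i : ι} (hi : i ∈ s) : x i = 0 :=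
  (CStarRing.mul_star_self_eq_zero_iff _).mp <|
    (Finset.sum_eq_zero_iff_of_nonneg fun j _ => mul_star_self_nonneg (x j)).mp h i hi

theorem UntwistedRel.apply_zero_left {N : ℕ} [NeZero N] {A : Type*} [CStarAlgebra A]
    {w : ZMod N → ZMod N → A} (hw : UntwistedRel N w) (i : ZMod N) :
    w 0 i = if i = 0 then 1 else 0 := by
  obtain ⟨hw1, hw2, -, hw4⟩ := hw
  have h00 : w 0 0 = 1 := by simpa using hw1 0
  have hrow : ∑ l, w 0 l * star (w 0 l) = 1 := by
    simpa [hw2, h00] using hw4 0 0 0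
  split_ifs with hi
  · rwa [hi]
  let := CStarAlgebra.spectralOrder A
  have := CStarAlgebra.spectralOrderedRing A
  have hrest := Finset.add_sum_erase _ (fun l => w 0 l * star (w 0 l)) (Finset.mem_univ 0)
  rw [hrow, h00, star_one, mul_one, add_eq_left] at hrest
  exact eq_zero_of_sum_mul_star_self_eq_zero hrest (Finset.mem_erase.mpr ⟨hi, Finset.mem_univ i⟩)

theorem stmt_13_general (N : ℕ) [NeZero N] (ω : ℂ) (hω : IsPrimitiveRoot ω N)
    {A : Type*} [NormedRing A] [StarRing A] [CStarRing A]
    [NormedAlgebra ℂ A] [CompleteSpace A] [StarModule ℂ A]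
    (w : ZMod N → ZMod N → A) (hw : UntwistedRel N w)
    (v : A) (hv : star v * v = 1 ∧ v * star v = 1) (hvN : v ^ N = 1)
    (hcomm : ∀ i j : ZMod N, v * w i j = wpow N ω (j - i) • (w i j * v)) :
    AnyonicPermRel N ω (fun i j => apow N v (-i) * w i j) := by
  let : CStarAlgebra A := {}
  exact hw.anyonicPermRel_apow_neg_mul hw.apply_zero_left hω.pow_eq_one
    (Unitary.mem_iff.mpr hv) hvN hcomm

theorem stmt_13 (N : ℕ) [NeZero N] (hN : 2 ≤ N) (ω : ℂ) (hω : IsPrimitiveRoot ω N)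
    {A : Type*} [NormedRing A] [StarRing A] [CStarRing A]
    [NormedAlgebra ℂ A] [CompleteSpace A] [StarModule ℂ A]
    (w : ZMod N → ZMod N → A) (hw : UntwistedRel N w)
    (v : A) (hv : star v * v = 1 ∧ v * star v = 1) (hvN : v ^ N = 1)
    (hcomm : ∀ i j : ZMod N, v * w i j = wpow N ω (j - i) • (w i j * v)) :
    AnyonicPermRel N ω (fun i j => apow N v (-i) * w i j) :=
  stmt_13_general N ω hω w hw v hv hvN hcomm
end
end

section
/- Let (a_{ij})_{i,j ∈ ℤ/Nℤ} be a family in A satisfying the untwisted relations, and let v ∈ A be a unitary with v^N = 1 that commutes with every a_{ij}. Then the family w_{ij} := v^{j-i} a_{ij} satisfies the untwisted relations. -/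
noncomputable section

theorem stmt_15 (N : ℕ) [NeZero N] (hN : 2 ≤ N) (ω : ℂ) (hω : IsPrimitiveRoot ω N)
    {A : Type*} [NormedRing A] [StarRing A] [CStarRing A]
    [NormedAlgebra ℂ A] [CompleteSpace A] [StarModule ℂ A]
    (a : ZMod N → ZMod N → A) (ha : UntwistedRel N a)
    (v : A) (hv : star v * v = 1 ∧ v * star v = 1) (hvN : v ^ N = 1)
    (hcomm : ∀ i j : ZMod N, v * a i j = a i j * v) :
    UntwistedRel N (fun i j => apow N v (j - i) * a i j) := by

  obtain ⟨h1, h2, h3, h4⟩ := ha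
  obtain ⟨hv1, hv2⟩ := hv
  have hNpos : 0 < N := Nat.pos_of_ne_zero (NeZero.ne N)
  have hmod : ∀ k : ℕ, v ^ k = v ^ (k % N) := by
    intro k
    conv_lhs => rw [← Nat.mod_add_div k N]
    rw [pow_add, pow_mul, hvN, one_pow, mul_one]
  have hcongr : ∀ k k' : ℕ, ((k : ZMod N) = (k' : ZMod N)) → v ^ k = v ^ k' := by
    intro k k' h
    rw [hmod k, hmod k']
    congr 1
    exact (ZMod.natCast_eq_natCast_iff k k' N).mp h
  have hadd : ∀ m n : ZMod N, apow N v m * apow N v n = apow N v (m + n) := by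
    intro m n
    unfold apow
    rw [← pow_add]
    apply hcongr
    push_cast [ZMod.natCast_val]
    simp [ZMod.cast_id]
  have hsv : star v = v ^ (N - 1) := by
    have h : v * v ^ (N - 1) = 1 := by
      rw [← pow_succ', Nat.sub_add_cancel (by omega : 1 ≤ N)]; exact hvN
    calc star v = star v * (v * v ^ (N - 1)) := by rw [h, mul_one]
      _ = (star v * v) * v ^ (N - 1) := by rw [mul_assoc]
      _ = v ^ (N - 1) := by rw [hv1, one_mul]
  have hstar : ∀ m : ZMod N, star (apow N v m) = apow N v (-m) := by
    intro m
    unfold apow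
    rw [star_pow, hsv, ← pow_mul]
    apply hcongr
    push_cast [Nat.cast_sub (by omega : 1 ≤ N), ZMod.natCast_val]
    simp [ZMod.natCast_self, ZMod.cast_id]
  have hcom : ∀ (m : ZMod N) (i j : ZMod N), a i j * apow N v m = apow N v m * a i j := by
    intro m i j
    exact ((Commute.pow_left (hcomm i j) m.val).eq).symm
  refine ⟨?_, ?_, ?_, ?_⟩
  · intro i
    simp only
    rw [h1 i]
    split_ifs with h
    · subst h; simp [apow]
    · rw [mul_zero]
  · intro i j
    simp only
    have e : -(j - i) = -j - -i := by ring
    rw [star_mul, hstar, h2, e, hcom]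
  · intro i j k
    simp only
    have key : ∀ l : ZMod N,
        (apow N v (i - (k - l)) * a (k - l) i) * (apow N v (j - l) * a l j)
        = apow N v (i + j - k) * (a (k - l) i * a l j) := by
      intro l
      have e : i - (k - l) + (j - l) = i + j - k := by ring
      rw [mul_assoc, ← mul_assoc (a (k - l) i), hcom, mul_assoc, ← mul_assoc, hadd, e]
    simp only [key]
    rw [← Finset.mul_sum, h3 i j k]
  · intro i j k
    simp only
    have key : ∀ l : ZMod N,
        (apow N v (l - j) * a j l) * (apow N v (k - l - i) * a i (k - l))
        = apow N v (k - (i + j)) * (a j l * a i (k - l)) := by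
      intro l
      have e : l - j + (k - l - i) = k - (i + j) := by ring
      rw [mul_assoc, ← mul_assoc (a j l), hcom, mul_assoc, ← mul_assoc, hadd, e]
    simp only [key]
    rw [← Finset.mul_sum, h4 i j k]
end
end

section
/- For every integer N ≥ 4 and every primitive N-th root of unity ω ∈ ℂ, there exist a unital C*-algebra A (which may be taken finite dimensional, e.g. a tensor product of matrix algebras over ℂ) and a family (q_{ij})_{i,j ∈ ℤ/Nℤ} in A satisfying the anyonic permutation relations such that q_{12} q_{23} ≠ q_{23} q_{12}; in fact one can achieve q_{12} q_{23} = ω q_{23} q_{12} with q_{12} q_{23} ≠ 0. -/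
noncomputable section

/-- A witness for the noncommutativity of the anyonic quantum permutation algebra:
a unital C*-algebra together with a family satisfying the anyonic permutation
relations whose entries `q 1 2` and `q 2 3` do not commute. -/
structure AnyonicWitness (N : ℕ) [NeZero N] (ω : ℂ) : Type 1 where
  A : Type
  [instNormedRing : NormedRing A]
  [instStarRing : StarRing A]
  [instCStarRing : CStarRing A]
  [instNormedAlgebra : NormedAlgebra ℂ A]
  [instCompleteSpace : CompleteSpace A]
  [instStarModule : StarModule ℂ A]
  q : ZMod N → ZMod N → A
  rel : AnyonicPermRel N ω q
  noncomm : q 1 2 * q 2 3 ≠ q 2 3 * q 1 2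
  braided : q 1 2 * q 2 3 = ω • (q 2 3 * q 1 2)
  nonzero : q 1 2 * q 2 3 ≠ 0

namespace Stmt18

set_option linter.unusedSectionVars false

variable {N : ℕ} [NeZero N] {ω : ℂ}

lemma pow_mod (h1 : ω ^ N = 1) (a : ℕ) : ω ^ (a % N) = ω ^ a := by
  conv_rhs => rw [← Nat.mod_add_div a N]
  rw [pow_add, pow_mul, h1, one_pow, mul_one]

lemma wpow_natCast (h1 : ω ^ N = 1) (a : ℕ) : wpow N ω (a : ZMod N) = ω ^ a := by
  unfold wpow
  rw [ZMod.val_natCast, pow_mod h1]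

lemma wpow_zero : wpow N ω 0 = 1 := by
  simp [wpow]

lemma wpow_add (h1 : ω ^ N = 1) (x y : ZMod N) :
    wpow N ω (x + y) = wpow N ω x * wpow N ω y := by
  unfold wpow
  rw [ZMod.val_add, pow_mod h1, pow_add]

lemma omega_ne_zero (h1 : ω ^ N = 1) : ω ≠ 0 := by
  rintro rfl
  simp [zero_pow (NeZero.ne N)] at h1

lemma wpow_ne_zero (h1 : ω ^ N = 1) (x : ZMod N) : wpow N ω x ≠ 0 :=
  pow_ne_zero _ (omega_ne_zero h1)

lemma wpow_mul_neg (h1 : ω ^ N = 1) (x : ZMod N) :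
    wpow N ω x * wpow N ω (-x) = 1 := by
  rw [← wpow_add h1, add_neg_cancel, wpow_zero]

lemma conj_wpow (h1 : ω ^ N = 1) (x : ZMod N) :
    (starRingEnd ℂ) (wpow N ω x) = wpow N ω (-x) := by
  have habs : ‖wpow N ω x‖ = 1 := by
    unfold wpow
    rw [norm_pow, Complex.norm_eq_one_of_pow_eq_one h1 (NeZero.ne N), one_pow]
  rw [← Complex.inv_eq_conj habs]
  exact inv_eq_of_mul_eq_one_right (wpow_mul_neg h1 x)

lemma sum_univ_zmod {M : Type*} [AddCommMonoid M] (f : ZMod N → M) :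
    ∑ s : ZMod N, f s = ∑ k ∈ Finset.range N, f k := by
  refine Finset.sum_bij' (fun s _ => s.val) (fun k _ => (k : ZMod N)) ?_ ?_ ?_ ?_ ?_
  · intro a _; exact Finset.mem_range.mpr (ZMod.val_lt a)
  · intro a _; exact Finset.mem_univ _
  · intro a _; simp [ZMod.natCast_val, ZMod.cast_id]
  · intro a ha; simp [ZMod.val_natCast_of_lt (Finset.mem_range.mp ha)]
  · intro a _; simp [ZMod.natCast_val, ZMod.cast_id]

lemma sum_wpow (hω : IsPrimitiveRoot ω N) (m : ZMod N) :
    ∑ s : ZMod N, wpow N ω (m * s) = if m = 0 then (N : ℂ) else 0 := by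
  have h1 : ω ^ N = 1 := hω.pow_eq_one
  have key : ∀ s : ZMod N, wpow N ω (m * s) = (ω ^ m.val) ^ s.val := by
    intro s
    unfold wpow
    rw [ZMod.val_mul, pow_mod h1, pow_mul]
  simp_rw [key]
  rw [sum_univ_zmod (fun s : ZMod N => (ω ^ m.val) ^ (s : ZMod N).val)]
  have hval : ∀ k ∈ Finset.range N, (ω ^ m.val) ^ ((k : ZMod N)).val = (ω ^ m.val) ^ k := by
    intro k hk
    rw [ZMod.val_natCast_of_lt (Finset.mem_range.mp hk)]
  rw [Finset.sum_congr rfl hval]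
  by_cases hm : m = 0
  · simp [hm]
  · rw [if_neg hm]
    have hζ : ω ^ m.val ≠ 1 := by
      intro h
      have := (hω.pow_eq_one_iff_dvd m.val).mp h
      have hlt := ZMod.val_lt m
      have h0 : m.val = 0 := Nat.eq_zero_of_dvd_of_lt this hlt
      exact hm ((ZMod.val_eq_zero m).mp h0)
    rw [geom_sum_eq hζ]
    rw [← pow_mul, mul_comm, pow_mul, h1, one_pow]
    simp

end Stmt18

noncomputable section

namespace Stmt18

variable {N : ℕ} [NeZero N] {ω : ℂ}

set_option linter.unusedSectionVars false

/-- scalar family: Fourier transform of the permutation matrix of the swap (0 1). -/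
def aa (N : ℕ) [NeZero N] (ω : ℂ) (i j : ZMod N) : ℂ :=
  (N : ℂ)⁻¹ * ∑ s : ZMod N, wpow N ω (j * s - i * (Equiv.swap (0 : ZMod N) 1 s))

lemma conv_general (hω : IsPrimitiveRoot ω N) (A C : ZMod N → ZMod N)
    (B : ZMod N → ZMod N) (hB : Function.Injective B) :
    ∑ l : ZMod N, (∑ s : ZMod N, wpow N ω (A s + l * B s)) *
      (∑ t : ZMod N, wpow N ω (C t - l * B t)) =
    (N : ℂ) * ∑ s : ZMod N, wpow N ω (A s + C s) := by
  have h1 : ω ^ N = 1 := hω.pow_eq_one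
  have step : ∀ l : ZMod N,
      (∑ s : ZMod N, wpow N ω (A s + l * B s)) * (∑ t : ZMod N, wpow N ω (C t - l * B t))
      = ∑ s : ZMod N, ∑ t : ZMod N, wpow N ω (A s + C t) * wpow N ω ((B s - B t) * l) := by
    intro l
    rw [Finset.sum_mul_sum]
    refine Finset.sum_congr rfl fun s _ => Finset.sum_congr rfl fun t _ => ?_
    rw [← wpow_add h1, ← wpow_add h1]
    congr 1
    ring
  simp_rw [step]
  rw [Finset.sum_comm]
  have swap2 : ∀ s : ZMod N,
      ∑ l : ZMod N, ∑ t : ZMod N, wpow N ω (A s + C t) * wpow N ω ((B s - B t) * l)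
      = ∑ t : ZMod N, wpow N ω (A s + C t) * ∑ l : ZMod N, wpow N ω ((B s - B t) * l) := by
    intro s
    rw [Finset.sum_comm]
    exact Finset.sum_congr rfl fun t _ => by rw [Finset.mul_sum]
  simp_rw [swap2, sum_wpow hω]
  have inner : ∀ s : ZMod N,
      ∑ t : ZMod N, wpow N ω (A s + C t) * (if B s - B t = 0 then (N : ℂ) else 0)
      = (N : ℂ) * wpow N ω (A s + C s) := by
    intro s
    have : ∀ t : ZMod N,
        wpow N ω (A s + C t) * (if B s - B t = 0 then (N : ℂ) else 0)
        = if t = s then (N : ℂ) * wpow N ω (A s + C s) else 0 := by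
      intro t
      by_cases h : t = s
      · subst h; simp [mul_comm]
      · have : B s - B t ≠ 0 := fun hc => h (hB (sub_eq_zero.mp hc)).symm
        simp [this, h]
    simp_rw [this]
    simp
  simp_rw [inner]
  rw [← Finset.mul_sum]

lemma aa_conv1 (hω : IsPrimitiveRoot ω N) (i j k : ZMod N) :
    ∑ l : ZMod N, aa N ω (k - l) i * aa N ω l j = aa N ω k (i + j) := by
  have h1 : ω ^ N = 1 := hω.pow_eq_one
  have hNne : (N : ℂ) ≠ 0 := Nat.cast_ne_zero.mpr (NeZero.ne N)
  unfold aa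
  set σ : ZMod N → ZMod N := fun s => Equiv.swap (0 : ZMod N) 1 s with hσ
  have key := conv_general hω (fun s => i * s - k * σ s) (fun t => j * t) σ
    (Equiv.injective _)
  calc ∑ l : ZMod N, ((N:ℂ)⁻¹ * ∑ s : ZMod N, wpow N ω (i * s - (k - l) * σ s)) *
        ((N:ℂ)⁻¹ * ∑ t : ZMod N, wpow N ω (j * t - l * σ t))
      = (N:ℂ)⁻¹ * (N:ℂ)⁻¹ * ∑ l : ZMod N,
          (∑ s : ZMod N, wpow N ω ((i * s - k * σ s) + l * σ s)) *
          (∑ t : ZMod N, wpow N ω ((j * t) - l * σ t)) := by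
        rw [Finset.mul_sum]
        refine Finset.sum_congr rfl fun l _ => ?_
        have e1 : ∀ s : ZMod N, i * s - (k - l) * σ s = (i * s - k * σ s) + l * σ s := by
          intro s; ring
        simp_rw [e1]
        ring
    _ = (N:ℂ)⁻¹ * (N:ℂ)⁻¹ * ((N:ℂ) * ∑ s : ZMod N, wpow N ω ((i * s - k * σ s) + j * s)) := by
        rw [key]
    _ = (N:ℂ)⁻¹ * ∑ s : ZMod N, wpow N ω ((i + j) * s - k * σ s) := by
        have e2 : ∀ s : ZMod N, (i * s - k * σ s) + j * s = (i + j) * s - k * σ s := by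
          intro s; ring
        simp_rw [e2]
        field_simp
    _ = (N:ℂ)⁻¹ * ∑ s : ZMod N, wpow N ω ((i + j) * s - k * σ s) := rfl

lemma aa_conv2 (hω : IsPrimitiveRoot ω N) (i j k : ZMod N) :
    ∑ l : ZMod N, aa N ω j l * aa N ω i (k - l) = aa N ω (i + j) k := by
  have h1 : ω ^ N = 1 := hω.pow_eq_one
  have hNne : (N : ℂ) ≠ 0 := Nat.cast_ne_zero.mpr (NeZero.ne N)
  unfold aa
  set σ : ZMod N → ZMod N := fun s => Equiv.swap (0 : ZMod N) 1 s with hσ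
  have key := conv_general hω (fun s => -(j * σ s)) (fun t => k * t - i * σ t)
    (fun s => s) (fun a b h => h)
  calc ∑ l : ZMod N, ((N:ℂ)⁻¹ * ∑ s : ZMod N, wpow N ω (l * s - j * σ s)) *
        ((N:ℂ)⁻¹ * ∑ t : ZMod N, wpow N ω ((k - l) * t - i * σ t))
      = (N:ℂ)⁻¹ * (N:ℂ)⁻¹ * ∑ l : ZMod N,
          (∑ s : ZMod N, wpow N ω (-(j * σ s) + l * s)) *
          (∑ t : ZMod N, wpow N ω ((k * t - i * σ t) - l * t)) := by
        rw [Finset.mul_sum]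
        refine Finset.sum_congr rfl fun l _ => ?_
        have e1 : ∀ s : ZMod N, l * s - j * σ s = -(j * σ s) + l * s := by
          intro s; ring
        have e2 : ∀ t : ZMod N, (k - l) * t - i * σ t = (k * t - i * σ t) - l * t := by
          intro t; ring
        simp_rw [e1, e2]
        ring
    _ = (N:ℂ)⁻¹ * (N:ℂ)⁻¹ * ((N:ℂ) * ∑ s : ZMod N, wpow N ω (-(j * σ s) + (k * s - i * σ s))) := by
        rw [key]
    _ = (N:ℂ)⁻¹ * ∑ s : ZMod N, wpow N ω (k * s - (i + j) * σ s) := by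
        have e3 : ∀ s : ZMod N, -(j * σ s) + (k * s - i * σ s) = k * s - (i + j) * σ s := by
          intro s; ring
        simp_rw [e3]
        field_simp

end Stmt18

noncomputable section
namespace Stmt18
variable {N : ℕ} [NeZero N] {ω : ℂ}
set_option linter.unusedSectionVars false

lemma aa_i0 (hω : IsPrimitiveRoot ω N) (i : ZMod N) :
    aa N ω i 0 = if i = 0 then 1 else 0 := by
  have hNne : (N : ℂ) ≠ 0 := Nat.cast_ne_zero.mpr (NeZero.ne N)
  unfold aa
  have e : ∀ s : ZMod N, (0 : ZMod N) * s - i * (Equiv.swap (0 : ZMod N) 1 s)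
      = (-i) * (Equiv.swap (0 : ZMod N) 1 s) := by intro s; ring
  simp_rw [e]
  rw [Fintype.sum_equiv (Equiv.swap (0 : ZMod N) 1)
    (fun s => wpow N ω ((-i) * (Equiv.swap (0 : ZMod N) 1 s)))
    (fun u => wpow N ω ((-i) * u)) (fun s => rfl)]
  rw [sum_wpow hω]
  by_cases h : i = 0
  · simp [h, hNne]
  · have : (-i) ≠ 0 := by simpa using h
    simp [this, h]

lemma aa_0j (hω : IsPrimitiveRoot ω N) (j : ZMod N) :
    aa N ω 0 j = if j = 0 then 1 else 0 := by
  have hNne : (N : ℂ) ≠ 0 := Nat.cast_ne_zero.mpr (NeZero.ne N)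
  unfold aa
  have e : ∀ s : ZMod N, j * s - (0 : ZMod N) * (Equiv.swap (0 : ZMod N) 1 s) = j * s := by
    intro s; ring
  simp_rw [e, sum_wpow hω]
  by_cases h : j = 0 <;> simp [h, hNne]

lemma aa_conj (hω : IsPrimitiveRoot ω N) (i j : ZMod N) :
    (starRingEnd ℂ) (aa N ω i j) = aa N ω (-i) (-j) := by
  have h1 : ω ^ N = 1 := hω.pow_eq_one
  unfold aa
  rw [map_mul, map_sum]
  congr 1
  · simp
  · refine Finset.sum_congr rfl fun s _ => ?_
    rw [conj_wpow h1]
    congr 1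
    ring

/-- closed form for the sum defining `aa`. -/
lemma aa_sum_eq (hω : IsPrimitiveRoot ω N) (hN : 1 < N) (i j : ZMod N) :
    ∑ s : ZMod N, wpow N ω (j * s - i * (Equiv.swap (0 : ZMod N) 1 s))
      = (if j - i = 0 then (N : ℂ) else 0) + (wpow N ω (-i) - 1)
        + (wpow N ω j - wpow N ω (j - i)) := by
  have h1 : ω ^ N = 1 := hω.pow_eq_one
  haveI : Fact (1 < N) := ⟨hN⟩
  have h01 : (0 : ZMod N) ≠ 1 := by
    intro h
    have := congrArg ZMod.val h
    rw [ZMod.val_zero, ZMod.val_one N] at this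
    exact absurd this (by norm_num)
  have key : ∀ s : ZMod N, wpow N ω (j * s - i * (Equiv.swap (0 : ZMod N) 1 s))
      = wpow N ω ((j - i) * s)
        + (if s = 0 then wpow N ω (-i) - 1 else 0)
        + (if s = 1 then wpow N ω j - wpow N ω (j - i) else 0) := by
    intro s
    by_cases h0 : s = 0
    · subst h0
      rw [Equiv.swap_apply_left, if_pos rfl, if_neg h01]
      have e1 : j * 0 - i * 1 = -i := by ring
      have e2 : (j - i) * 0 = 0 := by ring
      rw [e1, e2, wpow_zero]
      ring
    · by_cases hs1 : s = 1
      · subst hs1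
        rw [Equiv.swap_apply_right, if_neg h0, if_pos rfl]
        have e1 : j * 1 - i * 0 = j := by ring
        have e2 : (j - i) * 1 = j - i := by ring
        rw [e1, e2]
        ring
      · rw [Equiv.swap_apply_of_ne_of_ne h0 hs1, if_neg h0, if_neg hs1]
        have e : j * s - i * s = (j - i) * s := by ring
        rw [e]
        ring
  simp_rw [key]
  rw [Finset.sum_add_distrib, Finset.sum_add_distrib, sum_wpow hω]
  congr 1
  congr 1
  · exact Finset.sum_ite_eq' Finset.univ (0 : ZMod N) _ |>.trans (by simp)
  · exact Finset.sum_ite_eq' Finset.univ (1 : ZMod N) _ |>.trans (by simp)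

end Stmt18

noncomputable section
namespace Stmt18
variable {N : ℕ} [NeZero N] {ω : ℂ}
set_option linter.unusedSectionVars false

lemma wpow_one (hN : 1 < N) : wpow N ω 1 = ω := by
  haveI : Fact (1 < N) := ⟨hN⟩
  unfold wpow
  rw [ZMod.val_one N, pow_one]

lemma wpow_two (hN : 2 < N) (h1 : ω ^ N = 1) : wpow N ω 2 = ω ^ 2 := by
  have : ((2 : ℕ) : ZMod N) = (2 : ZMod N) := by norm_cast
  rw [← this, wpow_natCast h1]

lemma wpow_three (hN : 3 < N) (h1 : ω ^ N = 1) : wpow N ω 3 = ω ^ 3 := by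
  have : ((3 : ℕ) : ZMod N) = (3 : ZMod N) := by norm_cast
  rw [← this, wpow_natCast h1]

lemma one_ne_zero' (hN : 1 < N) : (1 : ZMod N) ≠ 0 := by
  haveI : Fact (1 < N) := ⟨hN⟩
  exact one_ne_zero

lemma aa12_ne (hω : IsPrimitiveRoot ω N) (hN : 4 ≤ N) : aa N ω 1 2 ≠ 0 := by
  have h1 : ω ^ N = 1 := hω.pow_eq_one
  have hN1 : 1 < N := by omega
  have hNne : (N : ℂ) ≠ 0 := Nat.cast_ne_zero.mpr (NeZero.ne N)
  unfold aa
  rw [aa_sum_eq hω hN1]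
  have h21 : (2 : ZMod N) - 1 = 1 := by ring
  rw [h21, if_neg (one_ne_zero' hN1)]
  set S : ℂ := 0 + (wpow N ω (-1) - 1) + (wpow N ω 2 - wpow N ω 1) with hS
  intro hc
  have hSzero : S = 0 := by
    rcases mul_eq_zero.mp hc with h | h
    · exact absurd h (inv_ne_zero hNne)
    · exact h
  have hωS : ω * S = (1 - ω) * (1 - ω ^ 2) := by
    have key : wpow N ω 1 * wpow N ω (-1) = 1 := wpow_mul_neg h1 1
    rw [wpow_one hN1] at key
    rw [hS, wpow_one hN1, wpow_two (by omega) h1]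
    linear_combination key
  rw [hSzero, mul_zero] at hωS
  have hω1 : (1 : ℂ) - ω ≠ 0 := sub_ne_zero.mpr (Ne.symm (hω.ne_one hN1))
  have hω2 : (1 : ℂ) - ω ^ 2 ≠ 0 :=
    sub_ne_zero.mpr (Ne.symm (hω.pow_ne_one_of_pos_of_lt (by norm_num) (by omega)))
  exact (mul_ne_zero hω1 hω2) hωS.symm

lemma aa23_ne (hω : IsPrimitiveRoot ω N) (hN : 4 ≤ N) : aa N ω 2 3 ≠ 0 := by
  have h1 : ω ^ N = 1 := hω.pow_eq_one
  have hN1 : 1 < N := by omega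
  have hNne : (N : ℂ) ≠ 0 := Nat.cast_ne_zero.mpr (NeZero.ne N)
  unfold aa
  rw [aa_sum_eq hω hN1]
  have h32 : (3 : ZMod N) - 2 = 1 := by ring
  rw [h32, if_neg (one_ne_zero' hN1)]
  set S : ℂ := 0 + (wpow N ω (-2) - 1) + (wpow N ω 3 - wpow N ω 1) with hS
  intro hc
  have hSzero : S = 0 := by
    rcases mul_eq_zero.mp hc with h | h
    · exact absurd h (inv_ne_zero hNne)
    · exact h
  have hωS : ω ^ 2 * S = (1 - ω ^ 2) * (1 - ω ^ 3) := by
    have key : wpow N ω 2 * wpow N ω (-2) = 1 := wpow_mul_neg h1 2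
    rw [wpow_two (by omega : 2 < N) h1] at key
    rw [hS, wpow_one hN1, wpow_three (by omega) h1]
    linear_combination key
  rw [hSzero, mul_zero] at hωS
  have hω2 : (1 : ℂ) - ω ^ 2 ≠ 0 :=
    sub_ne_zero.mpr (Ne.symm (hω.pow_ne_one_of_pos_of_lt (by norm_num) (by omega)))
  have hω3 : (1 : ℂ) - ω ^ 3 ≠ 0 :=
    sub_ne_zero.mpr (Ne.symm (hω.pow_ne_one_of_pos_of_lt (by norm_num) (by omega)))
  exact (mul_ne_zero hω2 hω3) hωS.symm

end Stmt18

noncomputable section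
namespace Stmt18
variable {N : ℕ} [NeZero N] {ω : ℂ}
set_option linter.unusedSectionVars false

/-- the Weyl matrix `Z^m X^{-n}`-style operator: `(W m n)_{s,t} = ω^{ms} δ_{t,s-n}`. -/
def WW (N : ℕ) [NeZero N] (ω : ℂ) (m n : ZMod N) : Matrix (ZMod N) (ZMod N) ℂ :=
  Matrix.of fun s t => if t = s - n then wpow N ω (m * s) else 0

lemma WW_mul (h1 : ω ^ N = 1) (m n m' n' : ZMod N) :
    WW N ω m n * WW N ω m' n' = wpow N ω (-(m' * n)) • WW N ω (m + m') (n + n') := by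
  ext s t
  rw [Matrix.mul_apply]
  simp only [WW, Matrix.of_apply, Matrix.smul_apply, smul_eq_mul]
  have e : ∀ r : ZMod N,
      (if r = s - n then wpow N ω (m * s) else 0) * (if t = r - n' then wpow N ω (m' * r) else 0)
      = if r = s - n then (if t = r - n' then wpow N ω (m * s) * wpow N ω (m' * r) else 0) else 0 := by
    intro r
    by_cases h : r = s - n <;> by_cases h' : t = r - n' <;> simp [h, h']
  simp_rw [e]
  rw [Finset.sum_ite_eq' Finset.univ (s - n)]
  simp only [Finset.mem_univ, if_true]
  have hcond : (t = s - n - n') ↔ (t = s - (n + n')) := by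
    constructor <;> intro h <;> rw [h] <;> ring
  by_cases h : t = s - (n + n')
  · rw [if_pos (hcond.mpr h), if_pos h]
    rw [← wpow_add h1, ← wpow_add h1]
    congr 1
    ring
  · rw [if_neg (fun hc => h (hcond.mp hc)), if_neg h, mul_zero]

lemma WW_star (h1 : ω ^ N = 1) (m n : ZMod N) :
    star (WW N ω m n) = wpow N ω (-(m * n)) • WW N ω (-m) (-n) := by
  ext s t
  rw [Matrix.star_apply]
  simp only [WW, Matrix.of_apply, Matrix.smul_apply, smul_eq_mul]
  have hcond : (s = t - n) ↔ (t = s - (-n)) := by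
    constructor <;> intro h <;> rw [h] <;> ring
  by_cases h : s = t - n
  · rw [if_pos h, if_pos (hcond.mp h)]
    rw [Complex.star_def, conj_wpow h1, ← wpow_add h1]
    congr 1
    rw [h]
    ring
  · rw [if_neg h, if_neg (fun hc => h (hcond.mpr hc)), star_zero, mul_zero]

lemma WW_zero_zero : WW N ω 0 0 = 1 := by
  ext s t
  simp only [WW, Matrix.of_apply, Matrix.one_apply, sub_zero, zero_mul, wpow_zero]
  by_cases h : t = s
  · simp [h]
  · rw [if_neg h, if_neg (fun hc : s = t => h hc.symm)]

lemma WW_ne_zero (h1 : ω ^ N = 1) (m n : ZMod N) : WW N ω m n ≠ 0 := by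
  intro h
  have := congrFun (congrFun h 0) (0 - n)
  simp only [WW, Matrix.of_apply, Matrix.zero_apply, if_pos rfl] at this
  exact wpow_ne_zero h1 _ this

/-- The twisted family of matrices. -/
def QQ (N : ℕ) [NeZero N] (ω : ℂ) (i j : ZMod N) : Matrix (ZMod N) (ZMod N) ℂ :=
  aa N ω i j • WW N ω i (i - j)

end Stmt18

noncomputable section
namespace Stmt18
variable {N : ℕ} [NeZero N] {ω : ℂ}
set_option linter.unusedSectionVars false

lemma QQ_mul (h1 : ω ^ N = 1) (i j i' j' : ZMod N) :
    QQ N ω i j * QQ N ω i' j' =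
      (aa N ω i j * aa N ω i' j' * wpow N ω (-(i' * (i - j)))) •
        WW N ω (i + i') ((i - j) + (i' - j')) := by
  unfold QQ
  rw [Matrix.smul_mul, Matrix.mul_smul, WW_mul h1, smul_smul, smul_smul]

lemma QQ_rel1 (hω : IsPrimitiveRoot ω N) (i : ZMod N) :
    QQ N ω 0 i = if i = 0 then 1 else 0 := by
  unfold QQ
  rw [aa_0j hω]
  by_cases h : i = 0
  · subst h
    rw [if_pos rfl, if_pos rfl, sub_zero, WW_zero_zero, one_smul]
  · rw [if_neg h, if_neg h, zero_smul]

lemma QQ_rel1' (hω : IsPrimitiveRoot ω N) (i : ZMod N) :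
    QQ N ω i 0 = if i = 0 then 1 else 0 := by
  unfold QQ
  rw [aa_i0 hω]
  by_cases h : i = 0
  · subst h
    rw [if_pos rfl, if_pos rfl, sub_zero, WW_zero_zero, one_smul]
  · rw [if_neg h, if_neg h, zero_smul]

lemma QQ_rel2 (hω : IsPrimitiveRoot ω N) (i j : ZMod N) :
    star (QQ N ω i j) = wpow N ω (-(i * (i - j))) • QQ N ω (-i) (-j) := by
  have h1 : ω ^ N = 1 := hω.pow_eq_one
  unfold QQ
  rw [star_smul, WW_star h1, Complex.star_def, aa_conj hω]
  have hidx : -(i - j) = (-i) - (-j) := by ring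
  rw [hidx, smul_smul, smul_smul]
  congr 1
  ring

lemma QQ_rel3 (hω : IsPrimitiveRoot ω N) (i j k : ZMod N) :
    QQ N ω k (i + j) =
      ∑ l : ZMod N, wpow N ω (-(l * (i - k + l))) • (QQ N ω (k - l) i * QQ N ω l j) := by
  have h1 : ω ^ N = 1 := hω.pow_eq_one
  have term : ∀ l : ZMod N,
      wpow N ω (-(l * (i - k + l))) • (QQ N ω (k - l) i * QQ N ω l j)
      = (aa N ω (k - l) i * aa N ω l j) • WW N ω k (k - (i + j)) := by
    intro l
    rw [QQ_mul h1, smul_smul]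
    have hidx1 : (k - l) + l = k := by ring
    have hidx2 : ((k - l) - i) + (l - j) = k - (i + j) := by ring
    rw [hidx1, hidx2]
    congr 1
    have hph : wpow N ω (-(l * (i - k + l))) * wpow N ω (-(l * ((k - l) - i))) = 1 := by
      rw [← wpow_add h1]
      have : -(l * (i - k + l)) + -(l * ((k - l) - i)) = 0 := by ring
      rw [this, wpow_zero]
    linear_combination (aa N ω (k - l) i * aa N ω l j) * hph
  simp_rw [term]
  rw [← Finset.sum_smul, aa_conv1 hω]
  rfl

lemma QQ_rel4 (hω : IsPrimitiveRoot ω N) (i j k : ZMod N) :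
    QQ N ω (i + j) k =
      ∑ l : ZMod N, wpow N ω (-(i * (l - j))) • (QQ N ω j l * QQ N ω i (k - l)) := by
  have h1 : ω ^ N = 1 := hω.pow_eq_one
  have term : ∀ l : ZMod N,
      wpow N ω (-(i * (l - j))) • (QQ N ω j l * QQ N ω i (k - l))
      = (aa N ω j l * aa N ω i (k - l)) • WW N ω (i + j) ((i + j) - k) := by
    intro l
    rw [QQ_mul h1, smul_smul]
    have hidx1 : j + i = i + j := by ring
    have hidx2 : (j - l) + (i - (k - l)) = (i + j) - k := by ring
    rw [hidx1, hidx2]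
    congr 1
    have hph : wpow N ω (-(i * (l - j))) * wpow N ω (-(i * (j - l))) = 1 := by
      rw [← wpow_add h1]
      have : -(i * (l - j)) + -(i * (j - l)) = 0 := by ring
      rw [this, wpow_zero]
    linear_combination (aa N ω j l * aa N ω i (k - l)) * hph
  simp_rw [term]
  rw [← Finset.sum_smul, aa_conv2 hω]
  rfl

lemma QQ_braided (hω : IsPrimitiveRoot ω N) (hN : 4 ≤ N) :
    QQ N ω 1 2 * QQ N ω 2 3 = ω • (QQ N ω 2 3 * QQ N ω 1 2) := by
  have h1 : ω ^ N = 1 := hω.pow_eq_one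
  have hN1 : 1 < N := by omega
  rw [QQ_mul h1, QQ_mul h1, smul_smul]
  have e1 : (1 : ZMod N) + 2 = 2 + 1 := by ring
  have e2 : ((1 : ZMod N) - 2) + (2 - 3) = (2 - 3) + (1 - 2) := by ring
  rw [e1, e2]
  congr 1
  have hw2 : wpow N ω (-(2 * ((1 : ZMod N) - 2))) = ω ^ 2 := by
    have : -(2 * ((1 : ZMod N) - 2)) = ((2 : ℕ) : ZMod N) := by push_cast; ring
    rw [this, wpow_natCast h1]
  have hw1 : wpow N ω (-(1 * ((2 : ZMod N) - 3))) = ω := by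
    have : -(1 * ((2 : ZMod N) - 3)) = ((1 : ℕ) : ZMod N) := by push_cast; ring
    rw [this, wpow_natCast h1, pow_one]
  rw [hw1, hw2]
  ring

lemma QQ_nonzero (hω : IsPrimitiveRoot ω N) (hN : 4 ≤ N) :
    QQ N ω 1 2 * QQ N ω 2 3 ≠ 0 := by
  have h1 : ω ^ N = 1 := hω.pow_eq_one
  rw [QQ_mul h1]
  refine smul_ne_zero ?_ (WW_ne_zero h1 _ _)
  exact mul_ne_zero (mul_ne_zero (aa12_ne hω hN) (aa23_ne hω hN)) (wpow_ne_zero h1 _)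

end Stmt18


noncomputable section
namespace Stmt18
variable {N : ℕ} [NeZero N] {ω : ℂ}
set_option linter.unusedSectionVars false

lemma QQ_noncomm (hω : IsPrimitiveRoot ω N) (hN : 4 ≤ N) :
    QQ N ω 1 2 * QQ N ω 2 3 ≠ QQ N ω 2 3 * QQ N ω 1 2 := by
  intro h
  have hb := QQ_braided hω hN
  rw [h] at hb
  have hyne : QQ N ω 2 3 * QQ N ω 1 2 ≠ 0 := by
    rw [← h]; exact QQ_nonzero hω hN
  have hz : (ω - 1) • (QQ N ω 2 3 * QQ N ω 1 2) = 0 := by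
    rw [sub_smul, one_smul, ← hb, sub_self]
  rcases smul_eq_zero.mp hz with h' | h'
  · exact hω.ne_one (by omega) (sub_eq_zero.mp h')
  · exact hyne h'

end Stmt18


set_option maxHeartbeats 1000000 in
set_option synthInstance.maxHeartbeats 400000 in
theorem stmt_18 (N : ℕ) [NeZero N] (hN : 4 ≤ N) (ω : ℂ) (hω : IsPrimitiveRoot ω N) :
    Nonempty (AnyonicWitness N ω) := by
  classical
  have h1 : ω ^ N = 1 := hω.pow_eq_one
  have hN1 : 1 < N := by omega
  let φ := Matrix.toEuclideanCLM (𝕜 := ℂ) (n := ZMod N)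
  have hbraid : φ (Stmt18.QQ N ω 1 2) * φ (Stmt18.QQ N ω 2 3)
      = ω • (φ (Stmt18.QQ N ω 2 3) * φ (Stmt18.QQ N ω 1 2)) := by
    have := congrArg φ (Stmt18.QQ_braided hω hN)
    rwa [map_mul, map_smul, map_mul] at this
  have hnonzero : φ (Stmt18.QQ N ω 1 2) * φ (Stmt18.QQ N ω 2 3) ≠ 0 := by
    intro h
    apply Stmt18.QQ_nonzero hω hN
    have h2 : φ (Stmt18.QQ N ω 1 2 * Stmt18.QQ N ω 2 3) = φ 0 := by
      rw [map_mul, map_zero]; exact h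
    exact EquivLike.injective φ h2
  have hnoncomm : φ (Stmt18.QQ N ω 1 2) * φ (Stmt18.QQ N ω 2 3)
      ≠ φ (Stmt18.QQ N ω 2 3) * φ (Stmt18.QQ N ω 1 2) := by
    intro h
    apply Stmt18.QQ_noncomm hω hN
    apply EquivLike.injective φ
    rw [map_mul, map_mul]
    exact h
  refine ⟨{
    A := EuclideanSpace ℂ (ZMod N) →L[ℂ] EuclideanSpace ℂ (ZMod N)
    q := fun i j => φ (Stmt18.QQ N ω i j)
    rel := ?_
    noncomm := hnoncomm
    braided := hbraid
    nonzero := hnonzero }⟩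
  refine ⟨?_, ?_, ?_, ?_, ?_⟩
  · intro i
    have := congrArg φ (Stmt18.QQ_rel1 hω i)
    rwa [apply_ite φ, map_one, map_zero] at this
  · intro i
    have := congrArg φ (Stmt18.QQ_rel1' hω i)
    rwa [apply_ite φ, map_one, map_zero] at this
  · intro i j
    have := congrArg φ (Stmt18.QQ_rel2 hω i j)
    rwa [map_star, map_smul] at this
  · intro i j k
    have := congrArg φ (Stmt18.QQ_rel3 hω i j k)
    rw [map_sum] at this
    simp only [map_smul, map_mul] at this
    exact this
  · intro i j k
    have := congrArg φ (Stmt18.QQ_rel4 hω i j k)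
    rw [map_sum] at this
    simp only [map_smul, map_mul] at this
    exact this
end
end
end
end
end
end
end
end
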